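/- arXiv:math-ph/0401043 — 6 statements merged into one kernel-verified Lean document; each statement's English description precedes it below -/
import Mathlib

section
/- Let N ≥ 1, let A : ℝ^N → ℝ^N be a C¹ vector field and set B_{jk} := ∂_j A_k − ∂_k A_j. Then for all ξ = (x,k) and η = (y,l) in ℝ^N × ℝ^N, every function u : ℝ^N → ℂ and every q ∈ ℝ^N, one has the composition law (W^A(ξ)(W^A(η)u))(q) = e^{(i/2)σ(ξ,η)} · Ω^B(q; x, y) · (W^A(ξ+η)u)(q). -/
open MeasureTheory Complex Real Filter
open scoped BigOperators ENNReal

noncomputable section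

/-- Euclidean dot product on `ℝ^N`. -/
def dotN {N : ℕ} (x y : Fin N → ℝ) : ℝ := ∑ i, x i * y i

/-- Circulation `Γ^A([x,y]) = ∫₀¹ (y−x)·A(x+s(y−x)) ds` of a vector field along a segment. -/
def circ {N : ℕ} (A : (Fin N → ℝ) → (Fin N → ℝ)) (x y : Fin N → ℝ) : ℝ :=
  ∫ s in (0:ℝ)..1, dotN (y - x) (A (x + s • (y - x)))

/-- The phase factor `Λ^A(q;x) = exp(−i Γ^A([q,q+x]))`. -/
def lam {N : ℕ} (A : (Fin N → ℝ) → (Fin N → ℝ)) (q x : Fin N → ℝ) : ℂ :=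
  Complex.exp (-Complex.I * (circ A q (q + x) : ℝ))

/-- The magnetic Weyl system `(W^A(x,p)u)(y) = e^{−i(y+x/2)·p} Λ^A(y;x) u(y+x)`. -/
def W {N : ℕ} (A : (Fin N → ℝ) → (Fin N → ℝ)) (x p : Fin N → ℝ)
    (u : (Fin N → ℝ) → ℂ) (y : Fin N → ℝ) : ℂ :=
  Complex.exp (-Complex.I * (dotN (y + (2:ℝ)⁻¹ • x) p : ℝ)) * lam A y x * u (y + x)

/-- The symplectic form `σ((x,k),(y,l)) = y·k − x·l` on `Ξ = ℝ^N × ℝ^N`. -/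
def symp {N : ℕ} (ξ η : (Fin N → ℝ) × (Fin N → ℝ)) : ℝ :=
  dotN η.1 ξ.2 - dotN ξ.1 η.2

/-- Flux `Γ^B(⟨a,b,c⟩)` of the 2-form `B` through the oriented triangle `⟨a,b,c⟩`. -/
def flux {N : ℕ} (B : (Fin N → ℝ) → Fin N → Fin N → ℝ) (a b c : Fin N → ℝ) : ℝ :=
  ∫ s in (0:ℝ)..1, ∫ t in (0:ℝ)..s,
    ∑ j, ∑ k, B (a + s • (b - a) + t • (c - b)) j k * (b - a) j * (c - b) k

/-- The phase factor `Ω^B(q;x,y) = exp(−i Γ^B(⟨q,q+x,q+x+y⟩))`. -/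
def Omeg {N : ℕ} (B : (Fin N → ℝ) → Fin N → Fin N → ℝ) (q x y : Fin N → ℝ) : ℂ :=
  Complex.exp (-Complex.I * (flux B q (q + x) (q + x + y) : ℝ))

/-- Partial derivative `∂_j f` of a real function on `ℝ^N`. -/
def pd {N : ℕ} (j : Fin N) (f : (Fin N → ℝ) → ℝ) (x : Fin N → ℝ) : ℝ :=
  fderiv ℝ f x (Pi.single j 1)

/-- A function is of class `C^∞_pol` (temperate growth) if it is smooth and every
derivative is polynomially bounded. -/
def IsCPol {E F : Type*} [NormedAddCommGroup E] [NormedSpace ℝ E]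
    [NormedAddCommGroup F] [NormedSpace ℝ F] (f : E → F) : Prop :=
  ContDiff ℝ (⊤ : ℕ∞) f ∧ ∀ n : ℕ, ∃ (C : ℝ) (m : ℕ), ∀ x, ‖iteratedFDeriv ℝ n f x‖ ≤ C * (1 + ‖x‖) ^ m

/-- The magnetic Weyl quantization
`(Op^A(f)u)(x) = (2π)^{−N} ∫∫ e^{i(x−y)·p} e^{−iΓ^A([x,y])} f((x+y)/2,p) u(y) dy dp`. -/
def Op {N : ℕ} (A : (Fin N → ℝ) → (Fin N → ℝ)) (f : ((Fin N → ℝ) × (Fin N → ℝ)) → ℂ)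
    (u : (Fin N → ℝ) → ℂ) (x : Fin N → ℝ) : ℂ :=
  (((2 * π) ^ N)⁻¹ : ℝ) * ∫ p : Fin N → ℝ, ∫ y : Fin N → ℝ,
    Complex.exp (Complex.I * (dotN (x - y) p : ℝ)) *
      Complex.exp (-Complex.I * (circ A x y : ℝ)) * f ((2:ℝ)⁻¹ • (x + y), p) * u y

/-- The magnetic Moyal product `f ∘^B g`. -/
def moyal {N : ℕ} (B : (Fin N → ℝ) → Fin N → Fin N → ℝ)
    (f g : ((Fin N → ℝ) × (Fin N → ℝ)) → ℂ) (ξ : (Fin N → ℝ) × (Fin N → ℝ)) : ℂ :=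
  ((π ^ (2 * N))⁻¹ : ℝ) *
    ∫ η : (Fin N → ℝ) × (Fin N → ℝ), ∫ ζ : (Fin N → ℝ) × (Fin N → ℝ),
      Complex.exp (-2 * Complex.I *
          (symp (ξ.1 - η.1, ξ.2 - η.2) (ξ.1 - ζ.1, ξ.2 - ζ.2) : ℝ)) *
        Complex.exp (-Complex.I *
          (flux B (ξ.1 - ζ.1 + η.1) (η.1 - ξ.1 + ζ.1) (ζ.1 - η.1 + ξ.1) : ℝ)) *
        f η * g ζ

lemma dotN_add_left {N : ℕ} (x y z : Fin N → ℝ) : dotN (x + y) z = dotN x z + dotN y z := by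
  simp [dotN, add_mul, Finset.sum_add_distrib]

lemma dotN_add_right {N : ℕ} (x y z : Fin N → ℝ) : dotN x (y + z) = dotN x y + dotN x z := by
  simp [dotN, mul_add, Finset.sum_add_distrib]

lemma dotN_smul_left {N : ℕ} (r : ℝ) (x y : Fin N → ℝ) : dotN (r • x) y = r * dotN x y := by
  simp [dotN, Finset.mul_sum, mul_assoc]

-- swap lemma

lemma swap_triangle (G : ℝ → ℝ → ℝ) (hG : Continuous fun p : ℝ × ℝ => G p.1 p.2) :
    ∫ s in (0:ℝ)..1, ∫ t in (0:ℝ)..s, G s t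
      = ∫ t in (0:ℝ)..1, ∫ s in t..(1:ℝ), G s t := by
  set T : Set (ℝ × ℝ) := {p | 0 < p.2 ∧ p.2 ≤ p.1 ∧ p.1 ≤ 1} with hT
  have hTm : MeasurableSet T := by
    have h1 : MeasurableSet {p : ℝ × ℝ | 0 < p.2} := measurableSet_lt measurable_const measurable_snd
    have h2 : MeasurableSet {p : ℝ × ℝ | p.2 ≤ p.1} := measurableSet_le measurable_snd measurable_fst
    have h3 : MeasurableSet {p : ℝ × ℝ | p.1 ≤ 1} := measurableSet_le measurable_fst measurable_const
    have : T = {p : ℝ × ℝ | 0 < p.2} ∩ ({p : ℝ × ℝ | p.2 ≤ p.1} ∩ {p : ℝ × ℝ | p.1 ≤ 1}) := by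
      ext p; simp [hT, Set.mem_inter_iff, and_assoc]
    rw [this]; exact h1.inter (h2.inter h3)
  set F : ℝ → ℝ → ℝ := fun s t => T.indicator (fun p : ℝ × ℝ => G p.1 p.2) (s, t) with hF
  have hsub : T ⊆ Set.Icc ((0,0) : ℝ × ℝ) (1,1) := by
    rintro ⟨s, t⟩ ⟨h1, h2, h3⟩
    simp only [Set.mem_Icc, Prod.le_def]
    refine ⟨⟨by linarith, by linarith⟩, ⟨by linarith, by linarith⟩⟩
  have hint : Integrable (Function.uncurry F) ((volume : Measure ℝ).prod volume) := by
    rw [← Measure.volume_eq_prod ℝ ℝ]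
    have : Function.uncurry F = T.indicator (fun p : ℝ × ℝ => G p.1 p.2) := rfl
    rw [this, integrable_indicator_iff hTm]
    exact (hG.continuousOn.integrableOn_compact isCompact_Icc).mono_set hsub
  have hL : ∀ s : ℝ, (∫ t, F s t) = (Set.Ioc (0:ℝ) 1).indicator
      (fun s => ∫ t in (0:ℝ)..s, G s t) s := by
    intro s
    by_cases hs : s ∈ Set.Ioc (0:ℝ) 1
    · have h1 : (fun t => F s t) = (Set.Ioc (0:ℝ) s).indicator (fun t => G s t) := by
        funext t
        by_cases ht : t ∈ Set.Ioc (0:ℝ) s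
        · rw [Set.indicator_of_mem ht]
          exact Set.indicator_of_mem (show (s,t) ∈ T from ⟨ht.1, ht.2, hs.2⟩) _
        · rw [Set.indicator_of_notMem ht]
          refine Set.indicator_of_notMem (fun hmem => ht ⟨hmem.1, hmem.2.1⟩) _
      rw [h1, integral_indicator measurableSet_Ioc, Set.indicator_of_mem hs,
        intervalIntegral.integral_of_le hs.1.le]
    · have h1 : (fun t => F s t) = fun _ => (0:ℝ) := by
        funext t
        refine Set.indicator_of_notMem (fun hmem => ?_) _
        rcases hmem with ⟨a1, a2, a3⟩
        simp only [Set.mem_Ioc, not_and_or, not_le, not_lt] at hs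
        rcases hs with hs | hs
        · exact absurd (lt_of_lt_of_le a1 a2) (not_lt.2 hs)
        · linarith
      rw [h1, Set.indicator_of_notMem hs]; simp
  have hR : ∀ t : ℝ, (∫ s, F s t) = (Set.Ioc (0:ℝ) 1).indicator
      (fun t => ∫ s in t..(1:ℝ), G s t) t := by
    intro t
    by_cases ht : t ∈ Set.Ioc (0:ℝ) 1
    · have h1 : (fun s => F s t) = (Set.Icc t (1:ℝ)).indicator (fun s => G s t) := by
        funext s
        by_cases hst : s ∈ Set.Icc t (1:ℝ)
        · rw [Set.indicator_of_mem hst]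
          exact Set.indicator_of_mem (show (s,t) ∈ T from ⟨ht.1, hst.1, hst.2⟩) _
        · rw [Set.indicator_of_notMem hst]
          refine Set.indicator_of_notMem (fun hmem => hst ⟨hmem.2.1, hmem.2.2⟩) _
      rw [h1, integral_indicator measurableSet_Icc, Set.indicator_of_mem ht,
        integral_Icc_eq_integral_Ioc, intervalIntegral.integral_of_le ht.2]
    · have h1 : (fun s => F s t) = fun _ => (0:ℝ) := by
        funext s
        refine Set.indicator_of_notMem (fun hmem => ?_) _
        rcases hmem with ⟨a1, a2, a3⟩
        simp only [Set.mem_Ioc, not_and_or, not_le, not_lt] at ht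
        rcases ht with ht | ht
        · exact absurd a1 (by simp; linarith)
        · linarith
      rw [h1, Set.indicator_of_notMem ht]; simp
  calc ∫ s in (0:ℝ)..1, ∫ t in (0:ℝ)..s, G s t
      = ∫ s, ∫ t, F s t := by
        symm
        simp_rw [hL]
        rw [integral_indicator measurableSet_Ioc, ← intervalIntegral.integral_of_le zero_le_one]
    _ = ∫ t, ∫ s, F s t := integral_integral_swap hint
    _ = ∫ t in (0:ℝ)..1, ∫ s in t..(1:ℝ), G s t := by
        simp_rw [hR]
        rw [integral_indicator measurableSet_Ioc, ← intervalIntegral.integral_of_le zero_le_one]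

lemma hasDerivAt_line {N : ℕ} (L : (Fin N → ℝ) → ℝ) (hL : ContDiff ℝ 1 L)
    (z w : Fin N → ℝ) (t : ℝ) :
    HasDerivAt (fun r : ℝ => L (z + r • w)) (fderiv ℝ L (z + t • w) w) t := by
  have h1 : HasDerivAt (fun r : ℝ => z + r • w) w t := by
    simpa using ((hasDerivAt_id t).smul_const w).const_add z
  exact ((hL.differentiable one_ne_zero (z + t • w)).hasFDerivAt).comp_hasDerivAt t h1

lemma cont_fderiv_line {N : ℕ} (L : (Fin N → ℝ) → ℝ) (hL : ContDiff ℝ 1 L) (w : Fin N → ℝ) :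
    Continuous fun z => fderiv ℝ L z w :=
  (hL.continuous_fderiv one_ne_zero).clm_apply continuous_const

lemma integral_fderiv_line {N : ℕ} (L : (Fin N → ℝ) → ℝ) (hL : ContDiff ℝ 1 L)
    (z w : Fin N → ℝ) (r0 r1 : ℝ) :
    ∫ t in r0..r1, fderiv ℝ L (z + t • w) w = L (z + r1 • w) - L (z + r0 • w) := by
  refine intervalIntegral.integral_eq_sub_of_hasDerivAt
    (fun t _ => hasDerivAt_line L hL z w t) ?_
  exact (((cont_fderiv_line L hL w).comp
    (continuous_const.add (continuous_id.smul continuous_const))).intervalIntegrable r0 r1)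

lemma contDiff_dotA {N : ℕ} (A : (Fin N → ℝ) → (Fin N → ℝ)) (hA : ContDiff ℝ 1 A)
    (u : Fin N → ℝ) : ContDiff ℝ 1 (fun z => dotN u (A z)) := by
  unfold dotN
  exact ContDiff.sum fun k _ => contDiff_const.mul ((ContinuousLinearMap.proj k :
    (Fin N → ℝ) →L[ℝ] ℝ).contDiff.comp hA)

lemma fderiv_dotA {N : ℕ} (A : (Fin N → ℝ) → (Fin N → ℝ)) (hA : ContDiff ℝ 1 A)
    (u z v : Fin N → ℝ) :
    fderiv ℝ (fun z => dotN u (A z)) z v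
      = ∑ k, u k * fderiv ℝ (fun z => A z k) z v := by
  have hAk : ∀ k : Fin N, HasFDerivAt (fun z => A z k)
      (fderiv ℝ (fun z => A z k) z) z := fun k =>
    (((ContinuousLinearMap.proj k : (Fin N → ℝ) →L[ℝ] ℝ).contDiff.comp
      hA).differentiable one_ne_zero z).hasFDerivAt
  have h : HasFDerivAt (fun z => dotN u (A z))
      (∑ k, u k • fderiv ℝ (fun z => A z k) z) z := by
    unfold dotN
    exact HasFDerivAt.fun_sum fun k _ => (hAk k).const_mul (u k)
  rw [h.fderiv]
  simp [ContinuousLinearMap.sum_apply]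

lemma fderiv_decomp {N : ℕ} (f : (Fin N → ℝ) → ℝ) (z : Fin N → ℝ) (v : Fin N → ℝ) :
    fderiv ℝ f z v = ∑ j, v j * fderiv ℝ f z (Pi.single j 1) := by
  have hv : v = ∑ j, v j • (Pi.single j 1 : Fin N → ℝ) := by
    funext i
    simp [Finset.sum_apply, Pi.single_apply, Finset.sum_ite_eq', mul_comm]
  conv_lhs => rw [hv]
  rw [map_sum]
  simp [smul_eq_mul]

lemma B_pointwise {N : ℕ} (A : (Fin N → ℝ) → (Fin N → ℝ)) (hA : ContDiff ℝ 1 A)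
    (B : (Fin N → ℝ) → Fin N → Fin N → ℝ)
    (hB : ∀ (z : Fin N → ℝ) (j k : Fin N),
      B z j k = pd j (fun w => A w k) z - pd k (fun w => A w j) z)
    (z v w : Fin N → ℝ) :
    (∑ j, ∑ k, B z j k * v j * w k)
      = fderiv ℝ (fun z => dotN w (A z)) z v - fderiv ℝ (fun z => dotN v (A z)) z w := by
  have e1 : ∀ v w : Fin N → ℝ, fderiv ℝ (fun z => dotN w (A z)) z v
      = ∑ k, ∑ j, w k * v j * fderiv ℝ (fun z => A z k) z (Pi.single j 1) := by
    intro v w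
    rw [fderiv_dotA A hA w z v]
    refine Finset.sum_congr rfl fun k _ => ?_
    rw [fderiv_decomp _ z v, Finset.mul_sum]
    exact Finset.sum_congr rfl fun j _ => by ring
  rw [e1 v w, e1 w v]
  simp only [hB, pd, sub_mul, Finset.sum_sub_distrib]
  congr 1
  · rw [Finset.sum_comm]
    exact Finset.sum_congr rfl fun k _ => Finset.sum_congr rfl fun j _ => by ring
  · exact Finset.sum_congr rfl fun k _ => Finset.sum_congr rfl fun j _ => by ring

lemma circ_circ {N : ℕ} (A : (Fin N → ℝ) → (Fin N → ℝ)) (hA : ContDiff ℝ 1 A)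
    (B : (Fin N → ℝ) → Fin N → Fin N → ℝ)
    (hB : ∀ (z : Fin N → ℝ) (j k : Fin N),
      B z j k = pd j (fun w => A w k) z - pd k (fun w => A w j) z)
    (a b c : Fin N → ℝ) :
    flux B a b c = circ A a b + circ A b c - circ A a c := by
  set v := b - a with hv
  set w := c - b with hw
  set gv : (Fin N → ℝ) → ℝ := fun z => dotN v (A z) with hgv
  set gw : (Fin N → ℝ) → ℝ := fun z => dotN w (A z) with hgw
  have hgv1 : ContDiff ℝ 1 gv := contDiff_dotA A hA v
  have hgw1 : ContDiff ℝ 1 gw := contDiff_dotA A hA w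
  set P : ℝ → ℝ → ℝ := fun s t => fderiv ℝ gw (a + s • v + t • w) v with hP
  set Q : ℝ → ℝ → ℝ := fun s t => fderiv ℝ gv (a + s • v + t • w) w with hQ
  have hcont : Continuous fun p : ℝ × ℝ => a + p.1 • v + p.2 • w :=
    (continuous_const.add (continuous_fst.smul continuous_const)).add
      (continuous_snd.smul continuous_const)
  have hPc : Continuous fun p : ℝ × ℝ => P p.1 p.2 :=
    (cont_fderiv_line gw hgw1 v).comp hcont
  have hQc : Continuous fun p : ℝ × ℝ => Q p.1 p.2 :=
    (cont_fderiv_line gv hgv1 w).comp hcont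
  have hcomm : ∀ s t : ℝ, a + s • v + t • w = a + t • w + s • v := by
    intro s t; abel
  -- step 1: rewrite the flux integrand
  have step1 : flux B a b c = ∫ s in (0:ℝ)..1, ∫ t in (0:ℝ)..s, (P s t - Q s t) := by
    rw [flux]
    refine intervalIntegral.integral_congr fun s _ => ?_
    refine intervalIntegral.integral_congr fun t _ => ?_
    exact B_pointwise A hA B hB _ v w
  -- step 2: inner FTC for Q
  have step2 : ∀ s : ℝ, (∫ t in (0:ℝ)..s, (P s t - Q s t))
      = (∫ t in (0:ℝ)..s, P s t) - (gv (a + s • v + s • w) - gv (a + s • v)) := by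
    intro s
    have iP : IntervalIntegrable (fun t => P s t) volume 0 s :=
      Continuous.intervalIntegrable (show Continuous fun t => P s t from
        hPc.comp (Continuous.prodMk_right s)) 0 s
    have iQ : IntervalIntegrable (fun t => Q s t) volume 0 s :=
      Continuous.intervalIntegrable (show Continuous fun t => Q s t from
        hQc.comp (Continuous.prodMk_right s)) 0 s
    rw [intervalIntegral.integral_sub iP iQ]
    congr 1
    have := integral_fderiv_line gv hgv1 (a + s • v) w 0 s
    simpa using this
  -- outer split
  have cP : Continuous fun s : ℝ => ∫ t in (0:ℝ)..s, P s t :=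
    intervalIntegral.continuous_parametric_intervalIntegral_of_continuous
      (show Continuous (Function.uncurry P) from hPc) continuous_id
  have cl1 : Continuous fun s : ℝ => a + s • v :=
    continuous_const.add (continuous_id.smul continuous_const)
  have cvline : Continuous fun s : ℝ => gv (a + s • v) := hgv1.continuous.comp cl1
  have cvdiag : Continuous fun s : ℝ => gv (a + s • v + s • w) :=
    hgv1.continuous.comp (cl1.add (continuous_id.smul continuous_const))
  have cwdiag : Continuous fun t : ℝ => gw (a + t • w + t • v) :=
    hgw1.continuous.comp ((continuous_const.add (continuous_id.smul continuous_const)).add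
      (continuous_id.smul continuous_const))
  have cwline : Continuous fun t : ℝ => gw (a + t • w + v) :=
    hgw1.continuous.comp ((continuous_const.add
      (continuous_id.smul continuous_const)).add continuous_const)
  have cdiag : Continuous fun s : ℝ => gv (a + s • v + s • w) - gv (a + s • v) :=
    cvdiag.sub cvline
  have step3 : flux B a b c = (∫ s in (0:ℝ)..1, ∫ t in (0:ℝ)..s, P s t)
      - ∫ s in (0:ℝ)..1, (gv (a + s • v + s • w) - gv (a + s • v)) := by
    rw [step1]
    rw [intervalIntegral.integral_congr (fun s _ => step2 s)]
    exact intervalIntegral.integral_sub (cP.intervalIntegrable 0 1)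
      (cdiag.intervalIntegrable 0 1)
  -- swap and FTC in s
  have step4 : (∫ s in (0:ℝ)..1, ∫ t in (0:ℝ)..s, P s t)
      = ∫ t in (0:ℝ)..1, (gw (a + t • w + v) - gw (a + t • w + t • v)) := by
    rw [swap_triangle P hPc]
    refine intervalIntegral.integral_congr fun t _ => ?_
    have h1 : (∫ s in t..(1:ℝ), P s t)
        = ∫ s in t..(1:ℝ), fderiv ℝ gw (a + t • w + s • v) v := by
      refine intervalIntegral.integral_congr fun s _ => ?_
      simp only [hP]; rw [hcomm]
    rw [h1, integral_fderiv_line gw hgw1 (a + t • w) v t 1, one_smul]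
  -- identification with circulations
  have hab : circ A a b = ∫ s in (0:ℝ)..1, gv (a + s • v) := rfl
  have hbc : circ A b c = ∫ t in (0:ℝ)..1, gw (a + t • w + v) := by
    rw [circ]
    refine intervalIntegral.integral_congr fun t _ => ?_
    have : b + t • (c - b) = a + t • w + v := by rw [hv, hw]; abel
    rw [← hw, this]
  have hac : circ A a c = (∫ t in (0:ℝ)..1, gw (a + t • w + t • v))
      + ∫ s in (0:ℝ)..1, gv (a + s • v + s • w) := by
    have c2 : Continuous fun t : ℝ => gv (a + t • v + t • w) :=
      hgv1.continuous.comp ((continuous_const.add (continuous_id.smul continuous_const)).add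
        (continuous_id.smul continuous_const))
    rw [← intervalIntegral.integral_add (cwdiag.intervalIntegrable 0 1)
      (c2.intervalIntegrable 0 1), circ]
    refine intervalIntegral.integral_congr fun t _ => ?_
    have harg1 : a + t • (c - a) = a + t • w + t • v := by rw [hv, hw]; module
    have harg2 : a + t • (c - a) = a + t • v + t • w := by rw [hv, hw]; module
    have hsum : c - a = w + v := by rw [hv, hw]; abel
    rw [harg1, hgw, hgv, ← harg1, harg2, ← harg2, hsum, dotN_add_left]
  have splitP : (∫ t in (0:ℝ)..1, (gw (a + t • w + v) - gw (a + t • w + t • v)))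
      = (∫ t in (0:ℝ)..1, gw (a + t • w + v)) - ∫ t in (0:ℝ)..1, gw (a + t • w + t • v) :=
    intervalIntegral.integral_sub (cwline.intervalIntegrable 0 1)
      (cwdiag.intervalIntegrable 0 1)
  have splitQ : (∫ s in (0:ℝ)..1, (gv (a + s • v + s • w) - gv (a + s • v)))
      = (∫ s in (0:ℝ)..1, gv (a + s • v + s • w)) - ∫ s in (0:ℝ)..1, gv (a + s • v) :=
    intervalIntegral.integral_sub (cvdiag.intervalIntegrable 0 1)
      (cvline.intervalIntegrable 0 1)
  rw [step3, step4, splitP, splitQ, hab, hbc, hac]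
  ring

lemma exp_combine (a b c d e f g h Z : ℂ) (hsum : a + b + c + d = e + f + g + h) :
    Complex.exp a * Complex.exp b * (Complex.exp c * Complex.exp d * Z)
      = Complex.exp e * Complex.exp f * (Complex.exp g * Complex.exp h * Z) := by
  rw [show Complex.exp a * Complex.exp b * (Complex.exp c * Complex.exp d * Z)
      = Complex.exp (a + b + c + d) * Z by
    rw [Complex.exp_add, Complex.exp_add, Complex.exp_add]; ring]
  rw [show Complex.exp e * Complex.exp f * (Complex.exp g * Complex.exp h * Z)
      = Complex.exp (e + f + g + h) * Z by
    rw [Complex.exp_add, Complex.exp_add, Complex.exp_add]; ring]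
  rw [hsum]

/-- composition law of the magnetic Weyl system:
`W^A(ξ) W^A(η) = e^{(i/2)σ(ξ,η)} Ω^B(Q;x,y) W^A(ξ+η)`. -/
theorem stmt0 {N : ℕ} (hN : 1 ≤ N) (A : (Fin N → ℝ) → (Fin N → ℝ))
    (hA : ContDiff ℝ 1 A) (B : (Fin N → ℝ) → Fin N → Fin N → ℝ)
    (hB : ∀ (z : Fin N → ℝ) (j k : Fin N),
      B z j k = pd j (fun w => A w k) z - pd k (fun w => A w j) z) :
    ∀ (x k y l : Fin N → ℝ) (u : (Fin N → ℝ) → ℂ) (q : Fin N → ℝ),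
      W A x k (W A y l u) q =
        Complex.exp (Complex.I / 2 * (symp (x, k) (y, l) : ℝ)) * Omeg B q x y *
          W A (x + y) (k + l) u q := by
  intro x k y l u q
  have key := circ_circ A hA B hB q (q + x) (q + (x + y))
  have hd : dotN (q + (2:ℝ)⁻¹ • x) k + dotN (q + x + (2:ℝ)⁻¹ • y) l
      + (dotN y k - dotN x l) / 2 = dotN (q + (2:ℝ)⁻¹ • (x + y)) (k + l) := by
    simp only [smul_add, dotN_add_left, dotN_add_right, dotN_smul_left]
    ring
  simp only [W, lam, Omeg, symp]
  rw [add_assoc q x y]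
  refine exp_combine _ _ _ _ _ _ _ _ _ ?_
  have hreal : dotN (q + (2:ℝ)⁻¹ • x) k + circ A q (q + x) + dotN (q + x + (2:ℝ)⁻¹ • y) l
      + circ A (q + x) (q + (x + y))
      = -((dotN y k - dotN x l) / 2) + flux B q (q + x) (q + (x + y))
        + dotN (q + (2:ℝ)⁻¹ • (x + y)) (k + l) + circ A q (q + (x + y)) := by
    linarith
  have hc := congrArg (fun r : ℝ => (r : ℂ)) hreal
  push_cast at hc
  linear_combination (-Complex.I) * hc - Complex.I / 2 * Complex.ofReal_sub (dotN y k) (dotN x l)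
end
end

section
/- Let N ≥ 1 and let B : ℝ^N → M_N(ℝ) be a C¹ map with antisymmetric values satisfying the closedness relation ∂_j B_{kl} + ∂_k B_{lj} + ∂_l B_{jk} = 0 on ℝ^N for all indices j, k, l. Then for all q, x, y, z ∈ ℝ^N the fluxes through the faces of the tetrahedron with vertices q, q+x, q+x+y, q+x+y+z satisfy Γ^B(⟨q, q+x+y, q+x+y+z⟩) + Γ^B(⟨q, q+x, q+x+y⟩) = Γ^B(⟨q+x, q+x+y, q+x+y+z⟩) + Γ^B(⟨q, q+x, q+x+y+z⟩); in particular the 2-cocycle identity Ω^B(q; x+y, z) · Ω^B(q; x, y) = Ω^B(q+x; y, z) · Ω^B(q; x, y+z) holds. -/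
open MeasureTheory Complex Real Filter
open scoped BigOperators ENNReal

noncomputable section

lemma paramDeriv {H H' : ℝ → ℝ → ℝ} (hH : Continuous (Function.uncurry H))
    (hH' : Continuous (Function.uncurry H'))
    (hd : ∀ r t : ℝ, HasDerivAt (fun ρ => H ρ t) (H' r t) r) (r₀ : ℝ) :
    HasDerivAt (fun r => ∫ t in (0:ℝ)..1, H r t) (∫ t in (0:ℝ)..1, H' r₀ t) r₀ := by
  obtain ⟨C, hC⟩ := ((isCompact_closedBall r₀ 1).prod
    (isCompact_Icc (a := (0:ℝ)) (b := 1))).exists_bound_of_continuousOn hH'.continuousOn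
  have h := intervalIntegral.hasDerivAt_integral_of_dominated_loc_of_deriv_le
    (F := H) (F' := H') (x₀ := r₀) (a := 0) (b := 1) (bound := fun _ => C)
    (μ := volume) (s := Metric.ball r₀ 1) (Metric.ball_mem_nhds r₀ one_pos)
    (Filter.Eventually.of_forall fun r =>
      (hH.comp (continuous_const.prodMk continuous_id)).aestronglyMeasurable)
    ((hH.comp (continuous_const.prodMk continuous_id)).intervalIntegrable _ _)
    (hH'.comp (continuous_const.prodMk continuous_id)).aestronglyMeasurable
    ?_ intervalIntegrable_const
    (Filter.Eventually.of_forall fun t _ x _ => hd x t)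
  · exact h.2
  · refine Filter.Eventually.of_forall fun t ht x hx => hC (x, t) ?_
    rw [Set.uIoc_of_le (by norm_num : (0:ℝ) ≤ 1)] at ht
    exact ⟨Metric.ball_subset_closedBall hx, ⟨ht.1.le, ht.2⟩⟩

lemma triangleFubini {G : ℝ → ℝ → ℝ} (hG : Continuous (Function.uncurry G)) :
    (∫ s in (0:ℝ)..1, ∫ t in (0:ℝ)..s, G s t) = ∫ t in (0:ℝ)..1, ∫ s in t..1, G s t := by
  set T : Set (ℝ × ℝ) := {p : ℝ × ℝ | 0 < p.2 ∧ p.2 ≤ p.1 ∧ p.1 ≤ 1} with hTdef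
  set f : ℝ → ℝ → ℝ := fun s t => if 0 < t ∧ t ≤ s ∧ s ≤ 1 then G s t else 0 with hf
  have hT : MeasurableSet T := by
    refine MeasurableSet.inter (measurableSet_lt measurable_const measurable_snd) ?_
    exact MeasurableSet.inter (measurableSet_le measurable_snd measurable_fst)
      (measurableSet_le measurable_fst measurable_const)
  have huncurry : Function.uncurry f = Set.indicator T (Function.uncurry G) := by
    funext p
    simp only [Function.uncurry, hf, Set.indicator, hTdef, Set.mem_setOf_eq]
  have hsub : T ⊆ Set.Icc ((0:ℝ),(0:ℝ)) (1,1) := by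
    rintro ⟨s, t⟩ ⟨h1, h2, h3⟩
    exact ⟨⟨le_trans h1.le h2, h1.le⟩, ⟨h3, le_trans h2 h3⟩⟩
  have hint : Integrable (Function.uncurry f) (volume : Measure (ℝ × ℝ)) := by
    rw [huncurry, integrable_indicator_iff hT]
    exact (hG.continuousOn.integrableOn_compact isCompact_Icc).mono_set hsub
  have hz1 : ∀ s, s ∉ Set.Ioc (0:ℝ) 1 → (∫ t, f s t) = 0 := by
    intro s hs
    have : f s = fun _ => 0 := by
      funext t
      simp only [hf]
      rw [if_neg]
      rintro ⟨h1, h2, h3⟩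
      exact hs ⟨lt_of_lt_of_le h1 h2, h3⟩
    rw [this, integral_zero]
  have hz2 : ∀ t, t ∉ Set.Ioc (0:ℝ) 1 → (∫ s, f s t) = 0 := by
    intro t ht
    have : (fun s => f s t) = fun _ => 0 := by
      funext s
      simp only [hf]
      rw [if_neg]
      rintro ⟨h1, h2, h3⟩
      exact ht ⟨h1, le_trans h2 h3⟩
    rw [this, integral_zero]
  have key1 : ∀ s ∈ Set.Ioc (0:ℝ) 1, (∫ t in (0:ℝ)..s, G s t) = ∫ t, f s t := by
    intro s hs
    have : f s = Set.indicator (Set.Ioc 0 s) (G s) := by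
      funext t
      simp only [hf, Set.indicator, Set.mem_Ioc]
      by_cases h : 0 < t ∧ t ≤ s
      · rw [if_pos ⟨h.1, h.2, hs.2⟩, if_pos h]
      · rw [if_neg (fun hh => h ⟨hh.1, hh.2.1⟩), if_neg h]
    rw [this, integral_indicator measurableSet_Ioc,
      intervalIntegral.integral_of_le hs.1.le]
  have key2 : ∀ t ∈ Set.Ioc (0:ℝ) 1, (∫ s, f s t) = ∫ s in t..1, G s t := by
    intro t ht
    have : (fun s => f s t) = Set.indicator (Set.Icc t 1) (fun s => G s t) := by
      funext s
      simp only [hf, Set.indicator, Set.mem_Icc]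
      by_cases h : t ≤ s ∧ s ≤ 1
      · rw [if_pos ⟨ht.1, h.1, h.2⟩, if_pos h]
      · rw [if_neg (fun hh => h ⟨hh.2.1, hh.2.2⟩), if_neg h]
    rw [this, integral_indicator measurableSet_Icc, integral_Icc_eq_integral_Ioc,
      intervalIntegral.integral_of_le ht.2]
  calc (∫ s in (0:ℝ)..1, ∫ t in (0:ℝ)..s, G s t)
      = ∫ s in Set.Ioc (0:ℝ) 1, ∫ t in (0:ℝ)..s, G s t :=
        intervalIntegral.integral_of_le zero_le_one
    _ = ∫ s in Set.Ioc (0:ℝ) 1, ∫ t, f s t :=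
        setIntegral_congr_fun measurableSet_Ioc fun s hs => key1 s hs
    _ = ∫ s, ∫ t, f s t := setIntegral_eq_integral_of_forall_compl_eq_zero hz1
    _ = ∫ t, ∫ s, f s t := by
        apply MeasureTheory.integral_integral_swap
        exact hint
    _ = ∫ t in Set.Ioc (0:ℝ) 1, ∫ s, f s t :=
        (setIntegral_eq_integral_of_forall_compl_eq_zero hz2).symm
    _ = ∫ t in Set.Ioc (0:ℝ) 1, ∫ s in t..1, G s t :=
        setIntegral_congr_fun measurableSet_Ioc fun t ht => key2 t ht
    _ = ∫ t in (0:ℝ)..1, ∫ s in t..1, G s t :=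
        (intervalIntegral.integral_of_le zero_le_one).symm



variable {N : ℕ}

/-- Poincaré potential based at 0. -/
def Apot (B : (Fin N → ℝ) → Fin N → Fin N → ℝ) (x : Fin N → ℝ) (k : Fin N) : ℝ :=
  ∫ t in (0:ℝ)..1, t * ∑ j, B (t • x) j k * x j

/-- Directional derivative of `Apot` in direction `u`. -/
def gdir (B : (Fin N → ℝ) → Fin N → Fin N → ℝ) (x u : Fin N → ℝ) (k : Fin N) : ℝ :=
  ∫ t in (0:ℝ)..1, (t * (∑ j, B (t • x) j k * u j)
    + t ^ 2 * (∑ j, fderiv ℝ (fun w => B w j k) (t • x) u * x j))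

/-- Line integral of `Apot` along a segment. -/
def Eline (B : (Fin N → ℝ) → Fin N → Fin N → ℝ) (a b : Fin N → ℝ) : ℝ :=
  ∫ s in (0:ℝ)..1, ∑ k, (b - a) k * Apot B (a + s • (b - a)) k

section BasicCont

variable {B : (Fin N → ℝ) → Fin N → Fin N → ℝ}
  (hB : ∀ j k : Fin N, ContDiff ℝ 1 fun z => B z j k)

include hB

lemma pathB (j k : Fin N) (x u : Fin N → ℝ) (r : ℝ) :
    HasDerivAt (fun ρ : ℝ => B (x + ρ • u) j k)
      (fderiv ℝ (fun w => B w j k) (x + r • u) u) r := by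
  have hpath : HasDerivAt (fun ρ : ℝ => x + ρ • u) u r := by
    simpa using ((hasDerivAt_id r).smul_const u).const_add x
  exact (((hB j k).differentiable one_ne_zero) _).hasFDerivAt.comp_hasDerivAt r hpath

lemma contB (j k : Fin N) : Continuous fun z => B z j k := (hB j k).continuous

lemma contB' (j k : Fin N) : Continuous fun z => fderiv ℝ (fun w => B w j k) z :=
  (hB j k).continuous_fderiv one_ne_zero

/-- Continuity of `gdir` in the base point. -/
lemma cont_gdir (u : Fin N → ℝ) (k : Fin N) : Continuous fun y => gdir B y u k := by
  apply intervalIntegral.continuous_parametric_intervalIntegral_of_continuous' (μ := volume)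
  apply Continuous.add
  · exact continuous_snd.mul (continuous_finset_sum _ fun j _ =>
      (((contB hB j k).comp (continuous_snd.smul continuous_fst)).mul continuous_const))
  · exact (continuous_snd.pow 2).mul (continuous_finset_sum _ fun j _ =>
      ((((contB' hB j k).comp (continuous_snd.smul continuous_fst)).clm_apply
        continuous_const).mul ((continuous_apply j).comp continuous_fst)))

lemma cont_Apot (k : Fin N) : Continuous fun y => Apot B y k := by
  apply intervalIntegral.continuous_parametric_intervalIntegral_of_continuous' (μ := volume)
  exact continuous_snd.mul (continuous_finset_sum _ fun j _ =>
    (((contB hB j k).comp (continuous_snd.smul continuous_fst)).mul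
      ((continuous_apply j).comp continuous_fst)))

lemma hasDerivAt_Apot (x u : Fin N → ℝ) (k : Fin N) (r : ℝ) :
    HasDerivAt (fun ρ => Apot B (x + ρ • u) k) (gdir B (x + r • u) u k) r := by
  have main := paramDeriv
    (H := fun ρ t => t * ∑ j, B (t • (x + ρ • u)) j k * (x + ρ • u) j)
    (H' := fun ρ t => t * (∑ j, B (t • (x + ρ • u)) j k * u j)
      + t ^ 2 * (∑ j, fderiv ℝ (fun w => B w j k) (t • (x + ρ • u)) u * (x + ρ • u) j))
    ?_ ?_ ?_ r
  · exact main
  · -- continuity of uncurried H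
    apply continuous_snd.mul
    apply continuous_finset_sum
    intro j _
    have hm : Continuous fun p : ℝ × ℝ => p.2 • (x + p.1 • u) :=
      continuous_snd.smul (continuous_const.add (continuous_fst.smul continuous_const))
    exact ((contB hB j k).comp hm).mul
      ((continuous_apply j).comp (continuous_const.add (continuous_fst.smul continuous_const)))
  · -- continuity of uncurried H'
    have hm : Continuous fun p : ℝ × ℝ => p.2 • (x + p.1 • u) :=
      continuous_snd.smul (continuous_const.add (continuous_fst.smul continuous_const))
    apply Continuous.add
    · exact continuous_snd.mul (continuous_finset_sum _ fun j _ =>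
        ((contB hB j k).comp hm).mul continuous_const)
    · exact (continuous_snd.pow 2).mul (continuous_finset_sum _ fun j _ =>
        (((contB' hB j k).comp hm).clm_apply continuous_const).mul
          ((continuous_apply j).comp (continuous_const.add (continuous_fst.smul continuous_const))))
  · -- pointwise derivative in ρ
    intro ρ t
    have hterm : ∀ j : Fin N, HasDerivAt (fun ρ' : ℝ => B (t • (x + ρ' • u)) j k * (x + ρ' • u) j)
        (fderiv ℝ (fun w => B w j k) (t • (x + ρ • u)) (t • u) * (x + ρ • u) j
          + B (t • (x + ρ • u)) j k * u j) ρ := by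
      intro j
      have h1 : HasDerivAt (fun ρ' : ℝ => B (t • (x + ρ' • u)) j k)
          (fderiv ℝ (fun w => B w j k) (t • (x + ρ • u)) (t • u)) ρ := by
        have := pathB hB j k (t • x) (t • u) (r := ρ)
        have hrw : ∀ ρ' : ℝ, t • x + ρ' • (t • u) = t • (x + ρ' • u) := by
          intro ρ'
          rw [smul_add, smul_comm]
        simp only [hrw] at this
        exact this
      have h2 : HasDerivAt (fun ρ' : ℝ => (x + ρ' • u) j) (u j) ρ := by
        have : ∀ ρ' : ℝ, (x + ρ' • u) j = x j + ρ' * u j := fun ρ' => rfl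
        simp only [this]
        simpa using ((hasDerivAt_id ρ).mul_const (u j)).const_add (x j)
      simpa using h1.fun_mul h2
    have hsum := (HasDerivAt.fun_sum (fun j (_ : j ∈ Finset.univ) => hterm j)).const_mul t
    refine hsum.congr_deriv (Eq.symm ?_)
    simp only [ContinuousLinearMap.map_smul, smul_eq_mul, Finset.mul_sum, Finset.sum_add_distrib,
      mul_add]
    rw [add_comm]
    congr 1 <;> exact Finset.sum_congr rfl fun j _ => by ring

end BasicCont



variable {N : ℕ}

lemma clm_apply_sum (L : (Fin N → ℝ) →L[ℝ] ℝ) (w : Fin N → ℝ) :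
    L w = ∑ l, w l * L (Pi.single l 1) := by
  have hw : w = ∑ l, w l • (Pi.single l 1 : Fin N → ℝ) := by
    funext m
    simp [Finset.sum_apply, Pi.single_apply]
  conv_lhs => rw [hw]
  rw [map_sum]
  simp [smul_eq_mul]

section Core

variable {B : (Fin N → ℝ) → Fin N → Fin N → ℝ}
  (hB : ∀ j k : Fin N, ContDiff ℝ 1 fun z => B z j k)
  (hanti : ∀ (z : Fin N → ℝ) (j k : Fin N), B z j k = - B z k j)
  (hclosed : ∀ (j k l : Fin N) (z : Fin N → ℝ),
      pd j (fun w => B w k l) z + pd k (fun w => B w l j) z + pd l (fun w => B w j k) z = 0)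

include hanti in
lemma partA (z u v : Fin N → ℝ) :
    (∑ k, v k * ∑ j, B z j k * u j) - (∑ k, u k * ∑ j, B z j k * v j)
      = 2 * ∑ j, ∑ k, B z j k * u j * v k := by
  have h1 : ∑ k, v k * ∑ j, B z j k * u j = ∑ j, ∑ k, B z j k * u j * v k := by
    simp only [Finset.mul_sum]
    rw [Finset.sum_comm]
    exact Finset.sum_congr rfl fun j _ => Finset.sum_congr rfl fun k _ => by ring
  have h2 : ∑ k, u k * ∑ j, B z j k * v j = -∑ j, ∑ k, B z j k * u j * v k := by
    simp only [Finset.mul_sum]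
    have halpha : (∑ k, ∑ j, u k * (B z j k * v j)) = ∑ j, ∑ k, u j * (B z k j * v k) := rfl
    rw [halpha]
    have : ∀ j ∈ (Finset.univ : Finset (Fin N)), ∑ k, u j * (B z k j * v k)
        = ∑ k, -(B z j k * u j * v k) := by
      intro j _
      refine Finset.sum_congr rfl fun k _ => ?_
      rw [hanti z k j]; ring
    rw [Finset.sum_congr rfl this]
    simp [Finset.sum_neg_distrib]
  rw [h1, h2]; ring

include hanti hclosed in
lemma partB (z x u v : Fin N → ℝ) :
    (∑ k, v k * ∑ j, fderiv ℝ (fun w => B w j k) z u * x j)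
      - (∑ k, u k * ∑ j, fderiv ℝ (fun w => B w j k) z v * x j)
      = ∑ j, ∑ k, fderiv ℝ (fun w => B w j k) z x * u j * v k := by
  set D : Fin N → Fin N → Fin N → ℝ :=
    fun a b c => fderiv ℝ (fun w => B w b c) z (Pi.single a 1) with hDdef
  have hdec : ∀ (j k : Fin N) (w : Fin N → ℝ),
      fderiv ℝ (fun w' => B w' j k) z w = ∑ l, w l * D l j k := fun j k w =>
    clm_apply_sum _ w
  have hDanti : ∀ a b c : Fin N, D a b c = - D a c b := by
    intro a b c
    have hfun : (fun w => B w b c) = fun w => -B w c b := funext fun w => hanti w b c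
    simp only [hDdef, hfun, fderiv_fun_neg, ContinuousLinearMap.neg_apply]
  have hcyc : ∀ a b c : Fin N, D a b c = - D b c a - D c a b := by
    intro a b c
    have := hclosed b c a z
    simp only [pd] at this
    simp only [hDdef]
    linarith
  -- flatten everything
  have hL1 : (∑ k, v k * ∑ j, (∑ l, u l * D l j k) * x j)
      = ∑ a, ∑ b, ∑ c, u a * x b * v c * D a b c := by
    simp only [Finset.mul_sum, Finset.sum_mul]
    calc (∑ k, ∑ j, ∑ l, v k * (u l * D l j k * x j))
        = ∑ j, ∑ k, ∑ l, v k * (u l * D l j k * x j) := Finset.sum_comm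
      _ = ∑ j, ∑ l, ∑ k, v k * (u l * D l j k * x j) :=
          Finset.sum_congr rfl fun _ _ => Finset.sum_comm
      _ = ∑ l, ∑ j, ∑ k, v k * (u l * D l j k * x j) := Finset.sum_comm
      _ = ∑ a, ∑ b, ∑ c, u a * x b * v c * D a b c :=
          Finset.sum_congr rfl fun _ _ => Finset.sum_congr rfl fun _ _ =>
            Finset.sum_congr rfl fun _ _ => by ring
  have hL2 : (∑ k, u k * ∑ j, (∑ l, v l * D l j k) * x j)
      = ∑ a, ∑ b, ∑ c, v a * x b * u c * D a b c := by
    simp only [Finset.mul_sum, Finset.sum_mul]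
    calc (∑ k, ∑ j, ∑ l, u k * (v l * D l j k * x j))
        = ∑ j, ∑ k, ∑ l, u k * (v l * D l j k * x j) := Finset.sum_comm
      _ = ∑ j, ∑ l, ∑ k, u k * (v l * D l j k * x j) :=
          Finset.sum_congr rfl fun _ _ => Finset.sum_comm
      _ = ∑ l, ∑ j, ∑ k, u k * (v l * D l j k * x j) := Finset.sum_comm
      _ = ∑ a, ∑ b, ∑ c, v a * x b * u c * D a b c :=
          Finset.sum_congr rfl fun _ _ => Finset.sum_congr rfl fun _ _ =>
            Finset.sum_congr rfl fun _ _ => by ring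
  have hR : (∑ j, ∑ k, (∑ l, x l * D l j k) * u j * v k)
      = ∑ a, ∑ b, ∑ c, x a * u b * v c * D a b c := by
    simp only [Finset.sum_mul]
    calc (∑ j, ∑ k, ∑ l, x l * D l j k * u j * v k)
        = ∑ k, ∑ j, ∑ l, x l * D l j k * u j * v k := Finset.sum_comm
      _ = ∑ k, ∑ l, ∑ j, x l * D l j k * u j * v k :=
          Finset.sum_congr rfl fun _ _ => Finset.sum_comm
      _ = ∑ l, ∑ k, ∑ j, x l * D l j k * u j * v k := Finset.sum_comm
      _ = ∑ l, ∑ j, ∑ k, x l * D l j k * u j * v k :=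
          Finset.sum_congr rfl fun _ _ => Finset.sum_comm
      _ = ∑ a, ∑ b, ∑ c, x a * u b * v c * D a b c :=
          Finset.sum_congr rfl fun _ _ => Finset.sum_congr rfl fun _ _ =>
            Finset.sum_congr rfl fun _ _ => by ring
  -- main triple-sum identity
  have hT1 : (∑ a, ∑ b, ∑ c, x a * u b * v c * D b c a)
      = ∑ a, ∑ b, ∑ c, u a * v b * x c * D a b c := by
    calc (∑ a, ∑ b, ∑ c, x a * u b * v c * D b c a)
        = ∑ b, ∑ a, ∑ c, x a * u b * v c * D b c a := Finset.sum_comm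
      _ = ∑ b, ∑ c, ∑ a, x a * u b * v c * D b c a :=
          Finset.sum_congr rfl fun _ _ => Finset.sum_comm
      _ = ∑ a, ∑ b, ∑ c, u a * v b * x c * D a b c :=
          Finset.sum_congr rfl fun _ _ => Finset.sum_congr rfl fun _ _ =>
            Finset.sum_congr rfl fun _ _ => by ring
  have hT2 : (∑ a, ∑ b, ∑ c, x a * u b * v c * D c a b)
      = ∑ a, ∑ b, ∑ c, v a * x b * u c * D a b c := by
    calc (∑ a, ∑ b, ∑ c, x a * u b * v c * D c a b)
        = ∑ b, ∑ a, ∑ c, x a * u b * v c * D c a b := Finset.sum_comm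
      _ = ∑ b, ∑ c, ∑ a, x a * u b * v c * D c a b :=
          Finset.sum_congr rfl fun _ _ => Finset.sum_comm
      _ = ∑ c, ∑ b, ∑ a, x a * u b * v c * D c a b := Finset.sum_comm
      _ = ∑ c, ∑ a, ∑ b, x a * u b * v c * D c a b :=
          Finset.sum_congr rfl fun _ _ => Finset.sum_comm
      _ = ∑ a, ∑ b, ∑ c, v a * x b * u c * D a b c :=
          Finset.sum_congr rfl fun _ _ => Finset.sum_congr rfl fun _ _ =>
            Finset.sum_congr rfl fun _ _ => by ring
  have hT3 : (∑ a, ∑ b, ∑ c, u a * v b * x c * D a b c)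
      = -∑ a, ∑ b, ∑ c, u a * x b * v c * D a b c := by
    calc (∑ a, ∑ b, ∑ c, u a * v b * x c * D a b c)
        = ∑ a, ∑ b, ∑ c, -(u a * x c * v b * D a c b) :=
          Finset.sum_congr rfl fun a _ => Finset.sum_congr rfl fun b _ =>
            Finset.sum_congr rfl fun c _ => by rw [hDanti a b c]; ring
      _ = -∑ a, ∑ b, ∑ c, u a * x c * v b * D a c b := by
          simp only [Finset.sum_neg_distrib]
      _ = -∑ a, ∑ c, ∑ b, u a * x c * v b * D a c b := by
          congr 1
          exact Finset.sum_congr rfl fun a _ => Finset.sum_comm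
  have main : (∑ a, ∑ b, ∑ c, x a * u b * v c * D a b c)
      = (∑ a, ∑ b, ∑ c, u a * x b * v c * D a b c)
        - ∑ a, ∑ b, ∑ c, v a * x b * u c * D a b c := by
    have step : (∑ a, ∑ b, ∑ c, x a * u b * v c * D a b c)
        = (∑ a, ∑ b, ∑ c, -(x a * u b * v c * D b c a))
          - ∑ a, ∑ b, ∑ c, x a * u b * v c * D c a b := by
      rw [Finset.sum_congr rfl fun a _ => Finset.sum_congr rfl fun b _ =>
        Finset.sum_congr rfl fun c _ => (by rw [hcyc a b c]; ring :
          x a * u b * v c * D a b c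
            = -(x a * u b * v c * D b c a) - x a * u b * v c * D c a b)]
      simp only [Finset.sum_sub_distrib]
    rw [step]
    have hneg : (∑ a, ∑ b, ∑ c, -(x a * u b * v c * D b c a))
        = -∑ a, ∑ b, ∑ c, x a * u b * v c * D b c a := by
      simp only [Finset.sum_neg_distrib]
    rw [hneg, hT1, hT2, hT3]
    ring
  simp only [hdec, hL1, hL2, hR, main]

include hanti hclosed in
lemma core (z x u v : Fin N → ℝ) (t : ℝ) :
    (∑ k, v k * (t * (∑ j, B z j k * u j)
        + t ^ 2 * (∑ j, fderiv ℝ (fun w => B w j k) z u * x j)))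
    - (∑ k, u k * (t * (∑ j, B z j k * v j)
        + t ^ 2 * (∑ j, fderiv ℝ (fun w => B w j k) z v * x j)))
    = (2 * t) * (∑ j, ∑ k, B z j k * u j * v k)
      + t ^ 2 * (∑ j, ∑ k, fderiv ℝ (fun w => B w j k) z x * u j * v k) := by
  have expand : ∀ (w a b : Fin N → ℝ) (aa bb : Fin N → ℝ),
      True := fun _ _ _ _ _ => trivial
  have e1 : ∀ (w : Fin N → ℝ) (F G : Fin N → ℝ),
      (∑ k, w k * (t * F k + t ^ 2 * G k))
        = t * (∑ k, w k * F k) + t ^ 2 * (∑ k, w k * G k) := by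
    intro w F G
    rw [Finset.mul_sum, Finset.mul_sum, ← Finset.sum_add_distrib]
    exact Finset.sum_congr rfl fun k _ => by ring
  rw [e1 v (fun k => ∑ j, B z j k * u j) (fun k => ∑ j, fderiv ℝ (fun w => B w j k) z u * x j),
    e1 u (fun k => ∑ j, B z j k * v j) (fun k => ∑ j, fderiv ℝ (fun w => B w j k) z v * x j)]
  have pA := partA hanti z u v
  have pB := partB hanti hclosed z x u v
  linear_combination t * pA + t ^ 2 * pB

end Core



variable {N : ℕ}

section Curl

variable {B : (Fin N → ℝ) → Fin N → Fin N → ℝ}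
  (hB : ∀ j k : Fin N, ContDiff ℝ 1 fun z => B z j k)
  (hanti : ∀ (z : Fin N → ℝ) (j k : Fin N), B z j k = - B z k j)
  (hclosed : ∀ (j k l : Fin N) (z : Fin N → ℝ),
      pd j (fun w => B w k l) z + pd k (fun w => B w l j) z + pd l (fun w => B w j k) z = 0)

include hB hanti hclosed in
lemma curl (x u v : Fin N → ℝ) :
    (∑ k, v k * gdir B x u k) - (∑ k, u k * gdir B x v k)
      = ∑ j, ∑ k, B x j k * u j * v k := by
  have contI : ∀ (w : Fin N → ℝ) (k : Fin N), Continuous fun t : ℝ =>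
      t * (∑ j, B (t • x) j k * w j)
        + t ^ 2 * (∑ j, fderiv ℝ (fun w' => B w' j k) (t • x) w * x j) := by
    intro w k
    apply Continuous.add
    · exact continuous_id.mul (continuous_finset_sum _ fun j _ =>
        ((contB hB j k).comp (continuous_id.smul continuous_const)).mul continuous_const)
    · exact (continuous_pow 2).mul (continuous_finset_sum _ fun j _ =>
        (((contB' hB j k).comp (continuous_id.smul continuous_const)).clm_apply
          continuous_const).mul continuous_const)
  have step : ∀ (w p : Fin N → ℝ), (∑ k, p k * gdir B x w k)
      = ∫ t in (0:ℝ)..1, ∑ k, p k * (t * (∑ j, B (t • x) j k * w j)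
        + t ^ 2 * (∑ j, fderiv ℝ (fun w' => B w' j k) (t • x) w * x j)) := by
    intro w p
    unfold gdir
    rw [intervalIntegral.integral_finset_sum (f := fun k t => p k * (t * (∑ j, B (t • x) j k * w j)
          + t ^ 2 * (∑ j, fderiv ℝ (fun w' => B w' j k) (t • x) w * x j))) (fun k _ =>
      ((continuous_const.mul (contI w k)).intervalIntegrable 0 1))]
    exact Finset.sum_congr rfl fun k _ => (intervalIntegral.integral_const_mul _ _).symm
  have c1 : Continuous fun t : ℝ => ∑ k, v k * (t * (∑ j, B (t • x) j k * u j)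
      + t ^ 2 * (∑ j, fderiv ℝ (fun w' => B w' j k) (t • x) u * x j)) :=
    continuous_finset_sum _ fun k _ => continuous_const.mul (contI u k)
  have c2 : Continuous fun t : ℝ => ∑ k, u k * (t * (∑ j, B (t • x) j k * v j)
      + t ^ 2 * (∑ j, fderiv ℝ (fun w' => B w' j k) (t • x) v * x j)) :=
    continuous_finset_sum _ fun k _ => continuous_const.mul (contI v k)
  rw [step u v, step v u, ← intervalIntegral.integral_sub (c1.intervalIntegrable 0 1)
    (c2.intervalIntegrable 0 1)]
  have ftc := intervalIntegral.integral_eq_sub_of_hasDerivAt (a := (0:ℝ)) (b := 1)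
    (f := fun t => t ^ 2 * ∑ j, ∑ k, B (t • x) j k * u j * v k)
    (f' := fun t => (∑ k, v k * (t * (∑ j, B (t • x) j k * u j)
        + t ^ 2 * (∑ j, fderiv ℝ (fun w' => B w' j k) (t • x) u * x j)))
      - (∑ k, u k * (t * (∑ j, B (t • x) j k * v j)
        + t ^ 2 * (∑ j, fderiv ℝ (fun w' => B w' j k) (t • x) v * x j))))
    ?_ ((c1.sub c2).intervalIntegrable 0 1)
  · rw [ftc]
    norm_num [one_smul]
  · intro t _
    have hS : HasDerivAt (fun t : ℝ => ∑ j, ∑ k, B (t • x) j k * u j * v k)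
        (∑ j, ∑ k, fderiv ℝ (fun w => B w j k) (t • x) x * u j * v k) t := by
      apply HasDerivAt.fun_sum
      intro j _
      apply HasDerivAt.fun_sum
      intro k _
      have hp := pathB hB j k 0 x t
      simp only [zero_add] at hp
      exact (hp.mul_const (u j)).mul_const (v k)
    have hmul := (hasDerivAt_pow 2 t).fun_mul hS
    refine hmul.congr_deriv (Eq.symm ?_)
    beta_reduce
    rw [core hanti hclosed (t • x) x u v t]
    push_cast
    ring
end Curl



variable {N : ℕ}

section Stokes

variable {B : (Fin N → ℝ) → Fin N → Fin N → ℝ}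
  (hB : ∀ j k : Fin N, ContDiff ℝ 1 fun z => B z j k)
  (hanti : ∀ (z : Fin N → ℝ) (j k : Fin N), B z j k = - B z k j)
  (hclosed : ∀ (j k l : Fin N) (z : Fin N → ℝ),
      pd j (fun w => B w k l) z + pd k (fun w => B w l j) z + pd l (fun w => B w j k) z = 0)

include hB hanti hclosed in
lemma stokes (a b c : Fin N → ℝ) :
    flux B a b c = Eline B a b + Eline B b c - Eline B a c := by
  have hGt : Continuous (Function.uncurry fun s t : ℝ =>
      ∑ k, (c - b) k * gdir B (a + s • (b - a) + t • (c - b)) (b - a) k) := by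
    apply continuous_finset_sum
    intro k _
    refine continuous_const.mul ((cont_gdir hB (b - a) k).comp ?_)
    exact ((continuous_const.add (continuous_fst.smul continuous_const)).add
      (continuous_snd.smul continuous_const))
  have hφ : ∀ s : ℝ, Continuous fun t : ℝ => a + s • (b - a) + t • (c - b) := by
    intro s
    exact continuous_const.add (continuous_id.smul continuous_const)
  have hφs : ∀ t : ℝ, Continuous fun s : ℝ => a + s • (b - a) + t • (c - b) := by
    intro t
    exact (continuous_const.add (continuous_id.smul continuous_const)).add continuous_const
  have hφss : Continuous fun s : ℝ => a + s • (b - a) + s • (c - b) :=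
    (continuous_const.add (continuous_id.smul continuous_const)).add
      (continuous_id.smul continuous_const)
  have hφs0 : Continuous fun s : ℝ => a + s • (b - a) + (0:ℝ) • (c - b) :=
    (continuous_const.add (continuous_id.smul continuous_const)).add continuous_const
  have hφ1t : Continuous fun t : ℝ => a + (1:ℝ) • (b - a) + t • (c - b) :=
    continuous_const.add (continuous_id.smul continuous_const)
  have hcA : ∀ (w : Fin N → ℝ) (φ : ℝ → Fin N → ℝ), Continuous φ →
      Continuous fun s : ℝ => ∑ k, w k * Apot B (φ s) k := by
    intro w φ hφc
    exact continuous_finset_sum _ fun k _ =>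
      continuous_const.mul ((cont_Apot hB k).comp hφc)
  -- Step 1: rewrite the flux integrand via `curl`
  have hflux : flux B a b c = ∫ s in (0:ℝ)..1, ∫ t in (0:ℝ)..s,
      ((∑ k, (c - b) k * gdir B (a + s • (b - a) + t • (c - b)) (b - a) k)
        - ∑ k, (b - a) k * gdir B (a + s • (b - a) + t • (c - b)) (c - b) k) := by
    unfold flux
    refine intervalIntegral.integral_congr fun s _ => ?_
    refine intervalIntegral.integral_congr fun t _ => ?_
    exact (curl hB hanti hclosed (a + s • (b - a) + t • (c - b)) (b - a) (c - b)).symm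
  -- Step 2: split the inner integral and apply FTC to the second piece
  have hsplit : ∀ s : ℝ, (∫ t in (0:ℝ)..s,
      ((∑ k, (c - b) k * gdir B (a + s • (b - a) + t • (c - b)) (b - a) k)
        - ∑ k, (b - a) k * gdir B (a + s • (b - a) + t • (c - b)) (c - b) k))
      = (∫ t in (0:ℝ)..s, ∑ k, (c - b) k * gdir B (a + s • (b - a) + t • (c - b)) (b - a) k)
        - ((∑ k, (b - a) k * Apot B (a + s • (b - a) + s • (c - b)) k)
          - ∑ k, (b - a) k * Apot B (a + s • (b - a) + (0:ℝ) • (c - b)) k) := by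
    intro s
    have hcont1 : Continuous fun t : ℝ =>
        ∑ k, (c - b) k * gdir B (a + s • (b - a) + t • (c - b)) (b - a) k :=
      continuous_finset_sum _ fun k _ =>
        continuous_const.mul ((cont_gdir hB (b - a) k).comp (hφ s))
    have hcont2 : Continuous fun t : ℝ =>
        ∑ k, (b - a) k * gdir B (a + s • (b - a) + t • (c - b)) (c - b) k :=
      continuous_finset_sum _ fun k _ =>
        continuous_const.mul ((cont_gdir hB (c - b) k).comp (hφ s))
    rw [intervalIntegral.integral_sub (hcont1.intervalIntegrable 0 s)
      (hcont2.intervalIntegrable 0 s)]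
    congr 1
    exact intervalIntegral.integral_eq_sub_of_hasDerivAt
      (fun t _ => HasDerivAt.fun_sum fun k _ =>
        ((hasDerivAt_Apot hB (a + s • (b - a)) (c - b) k t).const_mul ((b - a) k)))
      (hcont2.intervalIntegrable 0 s)
  -- Step 3: outer integral of the first piece, by Fubini and FTC in `s`
  have hfub : (∫ s in (0:ℝ)..1, ∫ t in (0:ℝ)..s,
      ∑ k, (c - b) k * gdir B (a + s • (b - a) + t • (c - b)) (b - a) k)
      = ∫ t in (0:ℝ)..1,
          ((∑ k, (c - b) k * Apot B (a + (1:ℝ) • (b - a) + t • (c - b)) k)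
            - ∑ k, (c - b) k * Apot B (a + t • (b - a) + t • (c - b)) k) := by
    rw [triangleFubini hGt]
    refine intervalIntegral.integral_congr fun t _ => ?_
    have h0 : ∀ ρ : ℝ, a + t • (c - b) + ρ • (b - a) = a + ρ • (b - a) + t • (c - b) :=
      fun ρ => by rw [add_right_comm]
    have hd : ∀ s : ℝ, HasDerivAt
        (fun s : ℝ => ∑ k, (c - b) k * Apot B (a + s • (b - a) + t • (c - b)) k)
        (∑ k, (c - b) k * gdir B (a + s • (b - a) + t • (c - b)) (b - a) k) s := by
      intro s
      have h1 := HasDerivAt.fun_sum fun k (_ : k ∈ Finset.univ) =>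
        ((hasDerivAt_Apot hB (a + t • (c - b)) (b - a) k s).const_mul ((c - b) k))
      simp only [h0] at h1
      exact h1
    have hcont : Continuous fun s : ℝ =>
        ∑ k, (c - b) k * gdir B (a + s • (b - a) + t • (c - b)) (b - a) k :=
      continuous_finset_sum _ fun k _ =>
        continuous_const.mul ((cont_gdir hB (b - a) k).comp (hφs t))
    exact intervalIntegral.integral_eq_sub_of_hasDerivAt (fun s _ => hd s)
      (hcont.intervalIntegrable t 1)
  -- Step 4: assemble
  have hF : IntervalIntegrable (fun s : ℝ => ∫ t in (0:ℝ)..s,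
      ∑ k, (c - b) k * gdir B (a + s • (b - a) + t • (c - b)) (b - a) k) volume 0 1 := by
    refine Continuous.intervalIntegrable ?_ 0 1
    exact intervalIntegral.continuous_parametric_intervalIntegral_of_continuous hGt continuous_id
  have hG := hcA (b - a) _ hφss
  have hH := hcA (b - a) _ hφs0
  have hI1 := hcA (c - b) _ hφ1t
  have hI2 := hcA (c - b) _ hφss
  rw [hflux, intervalIntegral.integral_congr fun s (_ : s ∈ Set.uIcc (0:ℝ) 1) => hsplit s,
    intervalIntegral.integral_sub hF ((hG.fun_sub hH).intervalIntegrable 0 1),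
    intervalIntegral.integral_sub (hG.intervalIntegrable 0 1) (hH.intervalIntegrable 0 1),
    hfub,
    intervalIntegral.integral_sub (hI1.intervalIntegrable 0 1) (hI2.intervalIntegrable 0 1)]
  -- identify with Eline terms
  have e1 : (∫ t in (0:ℝ)..1, ∑ k, (c - b) k * Apot B (a + (1:ℝ) • (b - a) + t • (c - b)) k)
      = Eline B b c := by
    unfold Eline
    refine intervalIntegral.integral_congr fun t _ => ?_
    have : a + (1:ℝ) • (b - a) + t • (c - b) = b + t • (c - b) := by
      rw [one_smul]; abel
    rw [this]
  have e2 : (∫ s in (0:ℝ)..1, ∑ k, (b - a) k * Apot B (a + s • (b - a) + (0:ℝ) • (c - b)) k)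
      = Eline B a b := by
    unfold Eline
    refine intervalIntegral.integral_congr fun s _ => ?_
    rw [zero_smul, add_zero]
  have e3 : (∫ t in (0:ℝ)..1, ∑ k, (c - b) k * Apot B (a + t • (b - a) + t • (c - b)) k)
      + (∫ s in (0:ℝ)..1, ∑ k, (b - a) k * Apot B (a + s • (b - a) + s • (c - b)) k)
      = Eline B a c := by
    unfold Eline
    rw [← intervalIntegral.integral_add (hI2.intervalIntegrable 0 1)
      (hG.intervalIntegrable 0 1)]
    refine intervalIntegral.integral_congr fun s _ => ?_
    have hpt : a + s • (c - a) = a + s • (b - a) + s • (c - b) := by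
      rw [show c - a = (b - a) + (c - b) by abel, smul_add, add_assoc]
    rw [hpt, ← Finset.sum_add_distrib]
    refine Finset.sum_congr rfl fun k _ => ?_
    have hk : (c - a) k = (b - a) k + (c - b) k := by
      simp only [Pi.sub_apply]; ring
    rw [hk]; ring
  rw [e1, e2]
  linarith [e3]
end Stokes

/-- for a closed magnetic field `B`, the fluxes through the faces of a
tetrahedron balance, yielding the 2-cocycle identity for `Ω^B`. -/
theorem stmt2 {N : ℕ} (hN : 1 ≤ N) (B : (Fin N → ℝ) → Fin N → Fin N → ℝ)
    (hB : ∀ j k : Fin N, ContDiff ℝ 1 (fun z => B z j k))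
    (hanti : ∀ (z : Fin N → ℝ) (j k : Fin N), B z j k = - B z k j)
    (hclosed : ∀ (j k l : Fin N) (z : Fin N → ℝ),
      pd j (fun w => B w k l) z + pd k (fun w => B w l j) z + pd l (fun w => B w j k) z = 0) :
    ∀ q x y z : Fin N → ℝ,
      flux B q (q + x + y) (q + x + y + z) + flux B q (q + x) (q + x + y) =
        flux B (q + x) (q + x + y) (q + x + y + z) + flux B q (q + x) (q + x + y + z) ∧
      Omeg B q (x + y) z * Omeg B q x y = Omeg B (q + x) y z * Omeg B q x (y + z) := by
  intro q x y z
  have h1 := stokes hB hanti hclosed q (q + x + y) (q + x + y + z)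
  have h2 := stokes hB hanti hclosed q (q + x) (q + x + y)
  have h3 := stokes hB hanti hclosed (q + x) (q + x + y) (q + x + y + z)
  have h4 := stokes hB hanti hclosed q (q + x) (q + x + y + z)
  have hflux : flux B q (q + x + y) (q + x + y + z) + flux B q (q + x) (q + x + y) =
      flux B (q + x) (q + x + y) (q + x + y + z) + flux B q (q + x) (q + x + y + z) := by
    rw [h1, h2, h3, h4]; ring
  refine ⟨hflux, ?_⟩
  unfold Omeg
  rw [show q + (x + y) = q + x + y from (add_assoc q x y).symm,
    show q + x + (y + z) = q + x + y + z from (add_assoc (q + x) y z).symm,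
    ← Complex.exp_add, ← Complex.exp_add]
  congr 1
  have hc : ((flux B q (q + x + y) (q + x + y + z) : ℝ) : ℂ)
      + ((flux B q (q + x) (q + x + y) : ℝ) : ℂ)
      = ((flux B (q + x) (q + x + y) (q + x + y + z) : ℝ) : ℂ)
        + ((flux B q (q + x) (q + x + y + z) : ℝ) : ℂ) := by
    exact_mod_cast hflux
  linear_combination (-Complex.I) * hc
end
end

section
/- Let N ≥ 1, let a : ℝ^N → ℝ be continuous, let x ∈ ℝ^N, t ∈ ℝ and u ∈ L²(ℝ^N). For each n ≥ 1 define v_n(y) := exp(−i (t/n) Σ_{k=0}^{n−1} a(y + (kt/n) x)) · u(y + tx) and v(y) := exp(−i ∫₀^t a(y + sx) ds) · u(y + tx). Then v_n converges to v in the norm of L²(ℝ^N) as n → ∞. (This is the analytic core of the proof that the magnetic Weyl system is the Trotter-product limit exponentiating Q·p − x·(P − A(Q)).) -/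
open MeasureTheory Complex Real Filter
open scoped BigOperators ENNReal

noncomputable section

open scoped Topology

/-- Left-endpoint Riemann sums of a continuous function converge to the integral. -/
lemma riemann_left (g : ℝ → ℝ) (hg : Continuous g) (t : ℝ) :
    Tendsto (fun n : ℕ => t / n * ∑ k ∈ Finset.range n, g ((k : ℝ) * t / n))
      atTop (𝓝 (∫ s in (0:ℝ)..t, g s)) := by
  rw [Metric.tendsto_atTop]
  intro ε hε
  have hK : IsCompact (Set.uIcc (0:ℝ) t) := isCompact_uIcc
  have huc : UniformContinuousOn g (Set.uIcc 0 t) :=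
    hK.uniformContinuousOn_of_continuous hg.continuousOn
  set ε' := ε / (|t| + 2) with hε'def
  have hε'pos : 0 < ε' := div_pos hε (by positivity)
  obtain ⟨δ, hδpos, hδ⟩ := Metric.uniformContinuousOn_iff.1 huc ε' hε'pos
  obtain ⟨M, hM⟩ := exists_nat_gt (|t| / δ)
  refine ⟨M + 1, fun n hn => ?_⟩
  have hn1 : 1 ≤ n := le_trans (Nat.le_add_left 1 M) hn
  have hn0 : (0:ℝ) < n := by exact_mod_cast hn1
  have hne : (n:ℝ) ≠ 0 := ne_of_gt hn0
  have hδn : |t| / n < δ := by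
    rw [div_lt_iff₀ hn0]
    have hMn : (M:ℝ) < n := by exact_mod_cast Nat.lt_of_lt_of_le (Nat.lt_succ_self M) hn
    have h1 : |t| / δ < n := lt_trans hM hMn
    calc |t| = |t| / δ * δ := by field_simp
    _ < n * δ := by exact mul_lt_mul_of_pos_right h1 hδpos
    _ = δ * n := mul_comm _ _
  set A : ℕ → ℝ := fun k => (k:ℝ) * t / n with hA
  have hmem : ∀ k : ℕ, k ≤ n → A k ∈ Set.uIcc (0:ℝ) t := by
    intro k hk
    have hkn : (k:ℝ) ≤ n := by exact_mod_cast hk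
    have hk0 : (0:ℝ) ≤ k := Nat.cast_nonneg k
    rcases le_total 0 t with ht | ht
    · rw [Set.uIcc_of_le ht]
      constructor
      · positivity
      · rw [div_le_iff₀ hn0]; nlinarith
    · rw [Set.uIcc_of_ge ht]
      constructor
      · rw [le_div_iff₀ hn0]; nlinarith
      · apply div_nonpos_of_nonpos_of_nonneg (by nlinarith) (le_of_lt hn0)
  have hAd : ∀ k : ℕ, A (k+1) - A k = t / n := by
    intro k; simp only [hA]; push_cast; field_simp; ring
  have hint : ∀ k : ℕ, k < n → IntervalIntegrable g volume (A k) (A (k+1)) :=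
    fun k _ => hg.intervalIntegrable _ _
  have hsplit : (∫ s in (0:ℝ)..t, g s) = ∑ k ∈ Finset.range n,
      ∫ s in (A k)..(A (k+1)), g s := by
    rw [intervalIntegral.sum_integral_adjacent_intervals hint]
    congr 1
    · simp [hA]
    · simp [hA]; field_simp
  have hconst : ∀ k : ℕ, t / n * g (A k) = ∫ s in (A k)..(A (k+1)), g (A k) := by
    intro k
    rw [intervalIntegral.integral_const, smul_eq_mul, hAd]
  have hSn : t / n * ∑ k ∈ Finset.range n, g (A k)
      = ∑ k ∈ Finset.range n, ∫ s in (A k)..(A (k+1)), g (A k) := by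
    rw [Finset.mul_sum]
    exact Finset.sum_congr rfl fun k _ => hconst k
  rw [Real.dist_eq, hSn, hsplit, ← Finset.sum_sub_distrib]
  have hterm : ∀ k ∈ Finset.range n,
      |(∫ s in (A k)..(A (k+1)), g (A k)) - ∫ s in (A k)..(A (k+1)), g s| ≤ ε' * (|t| / n) := by
    intro k hk
    have hkn : k < n := Finset.mem_range.1 hk
    rw [← intervalIntegral.integral_sub (intervalIntegrable_const) (hint k hkn)]
    have habs : |A (k+1) - A k| = |t| / n := by
      rw [hAd, abs_div, abs_of_pos hn0]
    have hb : ∀ s ∈ Set.uIoc (A k) (A (k+1)), ‖g (A k) - g s‖ ≤ ε' := by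
      intro s hs
      have hsub : Set.uIcc (A k) (A (k+1)) ⊆ Set.uIcc (0:ℝ) t :=
        Set.uIcc_subset_uIcc (hmem k (le_of_lt hkn)) (hmem (k+1) hkn)
      have hsmem : s ∈ Set.uIcc (0:ℝ) t := hsub (Set.uIoc_subset_uIcc hs)
      have hds : dist (A k) s < δ := by
        rw [Real.dist_eq]
        have h1 := hs.1
        have h2 := hs.2
        have h3 : min (A k) (A (k+1)) ≤ A k := min_le_left _ _
        have h4 : A k ≤ max (A k) (A (k+1)) := le_max_left _ _
        have h5 : max (A k) (A (k+1)) - min (A k) (A (k+1)) = |A (k+1) - A k| := by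
          exact max_sub_min_eq_abs _ _
        have : |A k - s| ≤ |A (k+1) - A k| := by
          rw [abs_sub_le_iff]; constructor <;> linarith
        calc |A k - s| ≤ |A (k+1) - A k| := this
        _ = |t| / n := habs
        _ < δ := hδn
      have := hδ (A k) (hmem k (le_of_lt hkn)) s hsmem hds
      rw [Real.dist_eq] at this
      exact le_of_lt this
    calc |(∫ s in (A k)..(A (k+1)), (g (A k) - g s))| ≤ ε' * |A (k+1) - A k| :=
      intervalIntegral.norm_integral_le_of_norm_le_const hb
    _ = ε' * (|t| / n) := by rw [habs]
  calc |∑ k ∈ Finset.range n, ((∫ s in (A k)..(A (k+1)), g (A k)) - ∫ s in (A k)..(A (k+1)), g s)|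
      ≤ ∑ k ∈ Finset.range n, |(∫ s in (A k)..(A (k+1)), g (A k)) - ∫ s in (A k)..(A (k+1)), g s| :=
        Finset.abs_sum_le_sum_abs _ _
    _ ≤ ∑ k ∈ Finset.range n, ε' * (|t| / n) := Finset.sum_le_sum hterm
    _ = n * (ε' * (|t| / n)) := by rw [Finset.sum_const, Finset.card_range, nsmul_eq_mul]
    _ = ε' * |t| := by field_simp
    _ < ε := by
      rw [hε'def, div_mul_eq_mul_div, div_lt_iff₀ (by positivity)]
      nlinarith [abs_nonneg t]

/-- Dominated-convergence criterion for `L²` convergence to zero. -/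
lemma tendsto_eLpNorm_two_of_dominated {α : Type*} [MeasurableSpace α] (μ : Measure α)
    (F : ℕ → α → ℂ) (hFm : ∀ n, AEStronglyMeasurable (F n) μ)
    (bound : α → ℝ≥0∞) (hbound : ∀ n y, (‖F n y‖₊ : ℝ≥0∞) ^ (2:ℝ) ≤ bound y)
    (hfin : ∫⁻ y, bound y ∂μ ≠ ∞)
    (hlim : ∀ y, Tendsto (fun n => F n y) atTop (𝓝 0)) :
    Tendsto (fun n => eLpNorm (F n) 2 μ) atTop (𝓝 0) := by
  have key : Tendsto (fun n => ∫⁻ y, (‖F n y‖₊ : ℝ≥0∞) ^ (2:ℝ) ∂μ) atTop (𝓝 0) := by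
    have h0 : (0:ℝ≥0∞) = ∫⁻ (_ : α), (0:ℝ≥0∞) ∂μ := by simp
    rw [h0]
    apply tendsto_lintegral_of_dominated_convergence' bound
    · exact fun n => ((hFm n).enorm).pow aemeasurable_const
    · exact fun n => Filter.Eventually.of_forall (hbound n)
    · exact hfin
    · apply Filter.Eventually.of_forall
      intro y
      have hcont : Continuous fun z : ℂ => (‖z‖₊ : ℝ≥0∞) ^ (2:ℝ) :=
        ENNReal.continuous_rpow_const.comp (ENNReal.continuous_coe.comp continuous_nnnorm)
      have := (hcont.tendsto 0).comp (hlim y)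
      simp only [Function.comp_def] at this
      convert this using 2
      simp [ENNReal.zero_rpow_of_pos]
  have heq : (fun n => eLpNorm (F n) 2 μ)
      = fun n => (∫⁻ y, (‖F n y‖₊ : ℝ≥0∞) ^ (2:ℝ) ∂μ) ^ (1/(2:ℝ)) := by
    funext n
    rw [eLpNorm_eq_lintegral_rpow_enorm_toReal two_ne_zero ENNReal.ofNat_ne_top]
    norm_num
    rfl
  rw [heq]
  have hc : Tendsto (fun z : ℝ≥0∞ => z ^ (1/(2:ℝ))) (𝓝 0) (𝓝 0) := by
    have h := ENNReal.continuous_rpow_const (y := 1/(2:ℝ)) |>.tendsto (0:ℝ≥0∞)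
    have h0 : ((0:ℝ≥0∞)) ^ (1/(2:ℝ)) = 0 := ENNReal.zero_rpow_of_pos (by norm_num)
    rwa [h0] at h
  exact hc.comp key

lemma phase_norm_one (r : ℝ) : ‖Complex.exp (-Complex.I * (r:ℂ))‖ = 1 := by
  rw [Complex.norm_exp]
  simp [Complex.mul_re]

lemma phase_diff_bound (r1 r2 : ℝ) (w : ℂ) :
    ‖Complex.exp (-Complex.I * (r1:ℂ)) * w - Complex.exp (-Complex.I * (r2:ℂ)) * w‖
      ≤ 2 * ‖w‖ := by
  calc _ ≤ ‖Complex.exp (-Complex.I * (r1:ℂ)) * w‖ +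
        ‖Complex.exp (-Complex.I * (r2:ℂ)) * w‖ := norm_sub_le _ _
  _ = 2 * ‖w‖ := by rw [norm_mul, norm_mul, phase_norm_one, phase_norm_one]; ring

lemma sq_enorm_bound (z w : ℂ) (h : ‖z‖ ≤ 2 * ‖w‖) :
    (‖z‖₊ : ℝ≥0∞) ^ (2:ℝ) ≤ 4 * (‖w‖₊ : ℝ≥0∞) ^ (2:ℝ) := by
  have h1 : (‖z‖₊ : ℝ≥0∞) ≤ 2 * (‖w‖₊ : ℝ≥0∞) := by
    rw [← ENNReal.ofReal_coe_nnreal, ← ENNReal.ofReal_coe_nnreal, coe_nnnorm, coe_nnnorm]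
    calc ENNReal.ofReal ‖z‖ ≤ ENNReal.ofReal (2 * ‖w‖) := ENNReal.ofReal_le_ofReal h
    _ = ENNReal.ofReal 2 * ENNReal.ofReal ‖w‖ := ENNReal.ofReal_mul (by norm_num)
    _ = 2 * ENNReal.ofReal ‖w‖ := by norm_num
  have h4 : ((2:ℝ≥0∞)) ^ (2:ℝ) = 4 := by
    rw [show ((2:ℝ)) = ((2:ℕ):ℝ) by norm_num, ENNReal.rpow_natCast]
    norm_num
  calc (‖z‖₊ : ℝ≥0∞) ^ (2:ℝ) ≤ (2 * (‖w‖₊ : ℝ≥0∞)) ^ (2:ℝ) :=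
      ENNReal.rpow_le_rpow h1 (by norm_num)
  _ = (2:ℝ≥0∞) ^ (2:ℝ) * (‖w‖₊ : ℝ≥0∞) ^ (2:ℝ) :=
      ENNReal.mul_rpow_of_nonneg _ _ (by norm_num)
  _ = 4 * (‖w‖₊ : ℝ≥0∞) ^ (2:ℝ) := by rw [h4]


/-- the Trotter-type L² limit: the Riemann-product approximants
`v_n(y) = exp(−i(t/n)Σ_{k<n} a(y+(kt/n)x)) u(y+tx)` converge in `L²(ℝ^N)` to
`v(y) = exp(−i∫₀ᵗ a(y+sx)ds) u(y+tx)`. -/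
theorem stmt5 {N : ℕ} (hN : 1 ≤ N) (a : (Fin N → ℝ) → ℝ) (ha : Continuous a)
    (x : Fin N → ℝ) (t : ℝ) (u : Lp ℂ 2 (volume : Measure (Fin N → ℝ))) :
    Tendsto (fun n : ℕ =>
      eLpNorm (fun y : Fin N → ℝ =>
        Complex.exp (-Complex.I *
            ((t / n * ∑ k ∈ Finset.range n, a (y + ((k : ℝ) * t / n) • x)) : ℝ)) *
            u (y + t • x) -
        Complex.exp (-Complex.I * ((∫ s in (0:ℝ)..t, a (y + s • x)) : ℝ)) * u (y + t • x))
        2 volume)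
      atTop (nhds 0) := by
  have hmp : MeasurePreserving (fun y : Fin N → ℝ => y + t • x) volume volume :=
    measurePreserving_add_right volume (t • x)
  have hUm : AEStronglyMeasurable (fun y : Fin N → ℝ => (u : (Fin N → ℝ) → ℂ) (y + t • x))
      volume := (Lp.aestronglyMeasurable u).comp_measurePreserving hmp
  have hθnc : ∀ n : ℕ, Continuous fun y : Fin N → ℝ =>
      t / n * ∑ k ∈ Finset.range n, a (y + ((k : ℝ) * t / n) • x) :=
    fun n => continuous_const.mul (continuous_finset_sum _ fun k _ =>
      ha.comp (continuous_id.add continuous_const))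
  have hlimθ : ∀ y : Fin N → ℝ,
      Tendsto (fun n : ℕ => t / n * ∑ k ∈ Finset.range n, a (y + ((k : ℝ) * t / n) • x))
        atTop (𝓝 (∫ s in (0:ℝ)..t, a (y + s • x))) := fun y =>
    riemann_left (fun s => a (y + s • x))
      (ha.comp (continuous_const.add (continuous_id.smul continuous_const))) t
  have hθm : Measurable fun y : Fin N → ℝ => ∫ s in (0:ℝ)..t, a (y + s • x) :=
    measurable_of_tendsto_metrizable (fun n => (hθnc n).measurable)
      (tendsto_pi_nhds.2 hlimθ)
  have hUfin : ∫⁻ y, 4 * (‖(u : (Fin N → ℝ) → ℂ) (y + t • x)‖₊ : ℝ≥0∞) ^ (2:ℝ) ∂volume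
      ≠ ∞ := by
    rw [lintegral_const_mul' _ _ (by norm_num)]
    apply ENNReal.mul_ne_top (by norm_num)
    have hU2 : eLpNorm (fun y : Fin N → ℝ => (u : (Fin N → ℝ) → ℂ) (y + t • x)) 2 volume
        = eLpNorm (u : (Fin N → ℝ) → ℂ) 2 volume :=
      eLpNorm_comp_measurePreserving (Lp.aestronglyMeasurable u) hmp
    have hlt : eLpNorm (fun y : Fin N → ℝ => (u : (Fin N → ℝ) → ℂ) (y + t • x)) 2 volume
        < ∞ := hU2 ▸ Lp.eLpNorm_lt_top u
    have := lintegral_rpow_enorm_lt_top_of_eLpNorm_lt_top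
      (f := fun y : Fin N → ℝ => (u : (Fin N → ℝ) → ℂ) (y + t • x))
      two_ne_zero ENNReal.ofNat_ne_top hlt
    simp only [ENNReal.toReal_ofNat] at this
    exact ne_of_lt this
  refine tendsto_eLpNorm_two_of_dominated volume
    (fun n y => Complex.exp (-Complex.I *
        ((t / n * ∑ k ∈ Finset.range n, a (y + ((k : ℝ) * t / n) • x)) : ℝ)) *
        (u : (Fin N → ℝ) → ℂ) (y + t • x) -
      Complex.exp (-Complex.I * ((∫ s in (0:ℝ)..t, a (y + s • x)) : ℝ)) *
        (u : (Fin N → ℝ) → ℂ) (y + t • x))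
    (fun n => ?_)
    (fun y => 4 * (‖(u : (Fin N → ℝ) → ℂ) (y + t • x)‖₊ : ℝ≥0∞) ^ (2:ℝ))
    (fun n y => sq_enorm_bound _ _ (phase_diff_bound _ _ _)) hUfin (fun y => ?_)
  · refine AEStronglyMeasurable.sub (AEStronglyMeasurable.mul ?_ hUm)
      (AEStronglyMeasurable.mul ?_ hUm)
    · exact (Complex.continuous_exp.comp (continuous_const.mul
        (Complex.continuous_ofReal.comp (hθnc n)))).aestronglyMeasurable
    · exact (Complex.measurable_exp.comp (measurable_const.mul
        (Complex.measurable_ofReal.comp hθm))).aestronglyMeasurable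
  · have hc : Continuous fun r : ℝ => Complex.exp (-Complex.I * (r:ℂ)) :=
      Complex.continuous_exp.comp (continuous_const.mul Complex.continuous_ofReal)
    have h2 := (((hc.tendsto _).comp (hlimθ y)).mul
      (tendsto_const_nhds (x := (u : (Fin N → ℝ) → ℂ) (y + t • x)))).sub
      (tendsto_const_nhds (x := Complex.exp
        (-Complex.I * ((∫ s in (0:ℝ)..t, a (y + s • x)) : ℝ)) *
        (u : (Fin N → ℝ) → ℂ) (y + t • x)))
    simpa using h2
end
end

section
/- Let N ≥ 1 and let A : ℝ^N → ℝ^N be continuous. The magnetic Weyl system W^A is irreducible: if K is a closed subspace of L²(ℝ^N) such that W^A(x,p)u ∈ K for every u ∈ K and every (x,p) ∈ ℝ^N × ℝ^N, then K = {0} or K = L²(ℝ^N). -/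
open MeasureTheory Complex Real Filter
open scoped BigOperators ENNReal

noncomputable section

section Aux
variable {N : ℕ} {A : (Fin N → ℝ) → (Fin N → ℝ)}

lemma dotN_continuous (x : Fin N → ℝ) : Continuous (dotN x) := by
  unfold dotN; exact continuous_finset_sum _ fun i _ => (continuous_const.mul (continuous_apply i))

lemma dotN_add_left_s8 (a b c : Fin N → ℝ) : dotN (a + b) c = dotN a c + dotN b c := by
  unfold dotN; rw [← Finset.sum_add_distrib]; congr 1; ext i; simp [add_mul]

lemma dotN_zero_right (a : Fin N → ℝ) : dotN a 0 = 0 := by simp [dotN]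

lemma circ_shift (A : (Fin N → ℝ) → (Fin N → ℝ)) (x y : Fin N → ℝ) :
    circ A y (y + x) = ∫ s in (0:ℝ)..1, dotN x (A (y + s • x)) := by
  unfold circ; simp [add_sub_cancel_left]

lemma continuous_circ_shift (hA : Continuous A) (x : Fin N → ℝ) :
    Continuous fun y : Fin N → ℝ => circ A y (y + x) := by
  simp only [circ_shift]
  apply intervalIntegral.continuous_parametric_intervalIntegral_of_continuous' (μ := volume)
    (f := fun (y : Fin N → ℝ) (s : ℝ) => dotN x (A (y + s • x)))
  exact (dotN_continuous x).comp <| hA.comp <| continuous_fst.add (continuous_snd.smul continuous_const)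

lemma continuous_lam (hA : Continuous A) (x : Fin N → ℝ) :
    Continuous fun y : Fin N → ℝ => lam A y x := by
  unfold lam
  exact Complex.continuous_exp.comp <|
    (continuous_const.mul ((Complex.continuous_ofReal.comp (continuous_circ_shift hA x))))

lemma norm_exp_neg_I_mul (r : ℝ) : ‖Complex.exp (-Complex.I * (r:ℝ))‖ = 1 := by
  simp [Complex.norm_exp]

lemma norm_lam (A : (Fin N → ℝ) → (Fin N → ℝ)) (q x : Fin N → ℝ) : ‖lam A q x‖ = 1 :=
  norm_exp_neg_I_mul _

lemma norm_W (x p : Fin N → ℝ) (u : (Fin N → ℝ) → ℂ) (y : Fin N → ℝ) :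
    ‖W A x p u y‖ = ‖u (y + x)‖ := by
  unfold W
  rw [norm_mul, norm_mul, norm_exp_neg_I_mul, norm_lam, one_mul, one_mul]

end Aux
section Aux2
variable {N : ℕ} {A : (Fin N → ℝ) → (Fin N → ℝ)}

lemma dotN_continuous_left (p : Fin N → ℝ) : Continuous fun a : Fin N → ℝ => dotN a p := by
  unfold dotN; exact continuous_finset_sum _ fun i _ => ((continuous_apply i).mul continuous_const)

lemma dotN_smul_left_s8 (c : ℝ) (a b : Fin N → ℝ) : dotN (c • a) b = c * dotN a b := by
  unfold dotN; rw [Finset.mul_sum]; congr 1; ext i; simp [mul_assoc]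

lemma aesm_W (hA : Continuous A) (x p : Fin N → ℝ) (u : Lp ℂ 2 (volume : Measure (Fin N → ℝ))) :
    AEStronglyMeasurable (W A x p ⇑u) volume := by
  unfold W
  refine AEStronglyMeasurable.mul (AEStronglyMeasurable.mul ?_ ?_) ?_
  · exact (Complex.continuous_exp.comp (continuous_const.mul
      (Complex.continuous_ofReal.comp ((dotN_continuous_left p).comp
        (continuous_id.add continuous_const))))).aestronglyMeasurable
  · exact (continuous_lam hA x).aestronglyMeasurable
  · exact ((Lp.stronglyMeasurable u).comp_measurable
      (measurable_id.add_const x)).aestronglyMeasurable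

lemma memW (hA : Continuous A) (x p : Fin N → ℝ) (u : Lp ℂ 2 (volume : Measure (Fin N → ℝ))) :
    MemLp (W A x p ⇑u) 2 volume := by
  refine ⟨aesm_W hA x p u, ?_⟩
  have h1 : eLpNorm (W A x p ⇑u) 2 volume
      = eLpNorm ((⇑u) ∘ (fun y => y + x)) 2 volume :=
    eLpNorm_congr_norm_ae (Filter.Eventually.of_forall fun y => by
      rw [norm_W]; rfl)
  rw [h1, eLpNorm_comp_measurePreserving (Lp.aestronglyMeasurable u)
    (measurePreserving_add_right volume x)]
  exact Lp.eLpNorm_lt_top u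

end Aux2
section Fourier
open scoped RealInnerProductSpace FourierTransform ContDiff

variable {N : ℕ}

lemma dotN_smul_right (c : ℝ) (a b : Fin N → ℝ) : dotN a (c • b) = c * dotN a b := by
  unfold dotN; rw [Finset.mul_sum]; congr 1; ext i; simp; ring

lemma inner_eq_dotN (v w : EuclideanSpace ℝ (Fin N)) :
    ⟪v, w⟫ = dotN (((MeasurableEquiv.toLp 2 (Fin N → ℝ)).symm) v)
      (((MeasurableEquiv.toLp 2 (Fin N → ℝ)).symm) w) := by
  simp [PiLp.inner_apply, dotN, RCLike.inner_apply, mul_comm]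

lemma key_ae_zero {h : (Fin N → ℝ) → ℂ} (hI : Integrable h (volume : Measure (Fin N → ℝ)))
    (hp : ∀ p : Fin N → ℝ,
      (∫ y : Fin N → ℝ, Complex.exp (Complex.I * (dotN y p : ℝ)) * h y) = 0) :
    ∀ᵐ y : Fin N → ℝ, h y = 0 := by
  set e := (MeasurableEquiv.toLp 2 (Fin N → ℝ)).symm with he
  have mp : MeasurePreserving e volume volume :=
    EuclideanSpace.volume_preserving_symm_measurableEquiv_toLp (Fin N)
  set H : EuclideanSpace ℝ (Fin N) → ℂ := h ∘ e with hHdef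
  have HI : Integrable H volume := (mp.integrable_comp_emb e.measurableEmbedding).mpr hI
  have hF : ∀ ξ, 𝓕 H ξ = 0 := by
    intro ξ
    rw [Real.fourier_eq']
    have heq : ∀ v : EuclideanSpace ℝ (Fin N),
        Complex.exp (↑(-2 * π * ⟪v, ξ⟫) * Complex.I) • H v
          = (fun y => Complex.exp (Complex.I * (dotN y ((-2 * π) • (e ξ)) : ℝ)) * h y) (e v) := by
      intro v
      simp only [smul_eq_mul, hHdef, Function.comp_apply]
      congr 1
      rw [dotN_smul_right, ← inner_eq_dotN, mul_comm]
    simp_rw [heq]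
    rw [mp.integral_comp e.measurableEmbedding
      (fun y => Complex.exp (Complex.I * (dotN y ((-2 * π) • (e ξ)) : ℝ)) * h y)]
    exact hp ((-2 * π) • (e ξ))
  have hH0 : ∀ᵐ v : EuclideanSpace ℝ (Fin N), H v = 0 := by
    apply ae_eq_zero_of_integral_contDiff_smul_eq_zero HI.locallyIntegrable
    intro g g_diff g_supp
    let gC : EuclideanSpace ℝ (Fin N) → ℂ := fun v => (g v : ℂ)
    have gC_diff : ContDiff ℝ ∞ gC := Complex.ofRealCLM.contDiff.comp g_diff
    have gC_supp : HasCompactSupport gC := g_supp.comp_left (g := Complex.ofReal) rfl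
    have decay : ∀ k n : ℕ, ∃ C : ℝ, ∀ x, ‖x‖ ^ k * ‖iteratedFDeriv ℝ n gC x‖ ≤ C := by
      intro k n
      have h1 : Continuous fun x : EuclideanSpace ℝ (Fin N) =>
          ‖x‖ ^ k * ‖iteratedFDeriv ℝ n gC x‖ :=
        (continuous_norm.pow k).mul (gC_diff.continuous_iteratedFDeriv (by exact_mod_cast le_top)).norm
      have h2 : HasCompactSupport fun x : EuclideanSpace ℝ (Fin N) =>
          ‖x‖ ^ k * ‖iteratedFDeriv ℝ n gC x‖ :=
        ((gC_supp.iteratedFDeriv n).norm).mul_left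
      obtain ⟨C, hC⟩ := h1.bounded_above_of_compact_support h2
      exact ⟨C, fun x => (Real.le_norm_self _).trans (hC x)⟩
    let gS : SchwartzMap (EuclideanSpace ℝ (Fin N)) ℂ := ⟨gC, gC_diff, decay⟩
    let G : SchwartzMap (EuclideanSpace ℝ (Fin N)) ℂ := (SchwartzMap.fourierTransformCLE ℂ (SchwartzMap (EuclideanSpace ℝ (Fin N)) ℂ)).symm gS
    have hGf : 𝓕 (⇑G) = ⇑gS := by
      have hG : ⇑G = 𝓕⁻ ⇑gS := by
        rw [← SchwartzMap.fourierInv_coe]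
        rfl
      rw [hG]
      refine gS.continuous.fourier_fourierInv_eq (gS.integrable (μ := volume)) ?_
      have : 𝓕 ⇑gS = ⇑(SchwartzMap.fourierTransformCLM ℂ gS) :=
        by rw [SchwartzMap.fourierTransformCLM_apply, SchwartzMap.fourier_coe]
      rw [this]
      exact ((SchwartzMap.fourierTransformCLM ℂ gS).integrable (μ := volume))
    have par := VectorFourier.integral_fourierIntegral_smul_eq_flip
      (L := innerₗ (EuclideanSpace ℝ (Fin N)))
      Real.continuous_fourierChar continuous_inner (G.integrable (μ := volume)) HI
    rw [flip_innerₗ] at par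
    have lhs_eq : (∫ ξ, (VectorFourier.fourierIntegral Real.fourierChar volume
        (innerₗ (EuclideanSpace ℝ (Fin N))) ⇑G ξ) • H ξ) = ∫ x, g x • H x := by
      congr 1
      funext ξ
      have : VectorFourier.fourierIntegral Real.fourierChar volume
          (innerₗ (EuclideanSpace ℝ (Fin N))) ⇑G ξ = 𝓕 (⇑G) ξ := rfl
      rw [this, hGf]
      show (gC ξ) • H ξ = g ξ • H ξ
      simp [gC, Complex.real_smul]
    have rhs_eq : (∫ x, (⇑G x) • (VectorFourier.fourierIntegral Real.fourierChar volume
        (innerₗ (EuclideanSpace ℝ (Fin N))) H x)) = 0 := by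
      have : ∀ x, VectorFourier.fourierIntegral Real.fourierChar volume
          (innerₗ (EuclideanSpace ℝ (Fin N))) H x = 0 := by
        intro x
        have : VectorFourier.fourierIntegral Real.fourierChar volume
            (innerₗ (EuclideanSpace ℝ (Fin N))) H x = 𝓕 H x := rfl
        rw [this, hF x]
      simp [this]
    rw [← lhs_eq, par, rhs_eq]
  have mps : MeasurePreserving (⇑e.symm) volume volume := mp.symm e
  have : (H ∘ ⇑e.symm) =ᵐ[volume] ((0 : EuclideanSpace ℝ (Fin N) → ℂ) ∘ ⇑e.symm) := by
    apply ae_eq_comp (mps.measurable.aemeasurable)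
    rw [mps.map_eq]
    exact hH0
  have hcomp : (H ∘ ⇑e.symm) = h := by
    funext y
    simp [hHdef, Function.comp_apply]
  rw [hcomp] at this
  exact this

end Fourier
section Main
variable {N : ℕ} {A : (Fin N → ℝ) → (Fin N → ℝ)}

lemma conjW_mul (x p : Fin N → ℝ) (uf vf : (Fin N → ℝ) → ℂ) (y : Fin N → ℝ) :
    (starRingEnd ℂ) (W A x p uf y) * vf y
      = Complex.exp (Complex.I * (dotN ((2:ℝ)⁻¹ • x) p : ℝ)) *
        (Complex.exp (Complex.I * (dotN y p : ℝ)) *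
          ((starRingEnd ℂ) (lam A y x * uf (y + x)) * vf y)) := by
  unfold W
  rw [map_mul, map_mul]
  have hc : ∀ r : ℝ, (starRingEnd ℂ) (Complex.exp (-Complex.I * (r:ℝ)))
      = Complex.exp (Complex.I * (r:ℝ)) := by
    intro r
    rw [← Complex.exp_conj]
    congr 1
    simp [map_mul, Complex.conj_I, Complex.conj_ofReal]
  rw [hc, dotN_add_left_s8]
  push_cast
  rw [mul_add, Complex.exp_add, map_mul]
  ring

lemma stmt8_main {N : ℕ} (A : (Fin N → ℝ) → (Fin N → ℝ))
    (hA : Continuous A) (K : Submodule ℂ (Lp ℂ 2 (volume : Measure (Fin N → ℝ))))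
    (hK : IsClosed (K : Set (Lp ℂ 2 (volume : Measure (Fin N → ℝ)))))
    (hinv : ∀ u ∈ K, ∀ x p : Fin N → ℝ,
      ∀ w : Lp ℂ 2 (volume : Measure (Fin N → ℝ)),
        (∀ᵐ y : Fin N → ℝ, w y = W A x p (⇑u) y) → w ∈ K)
    (hbot : K ≠ ⊥) : K = ⊤ := by
  haveI : CompleteSpace K := hK.completeSpace_coe
  rw [← Submodule.orthogonal_eq_bot_iff]
  rw [Submodule.eq_bot_iff]
  intro v hv
  obtain ⟨u, huK, hu0⟩ := Submodule.exists_mem_ne_zero_of_ne_bot hbot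
  have main : ∀ x : Fin N → ℝ, ∀ᵐ y : Fin N → ℝ, (‖(⇑u) (y + x)‖ * ‖(⇑v) y‖ : ℝ) = 0 := by
    intro x
    set g0 : (Fin N → ℝ) → ℂ := fun y => lam A y x * (⇑u) (y + x) with hg0
    have hW0 : W A x 0 (⇑u) = g0 := by
      funext y
      unfold W
      rw [dotN_zero_right]
      simp [g0]
    have hmem0 : MemLp g0 2 volume := hW0 ▸ memW hA x 0 u
    set w0 : Lp ℂ 2 (volume : Measure (Fin N → ℝ)) := hmem0.toLp g0 with hw0
    set h : (Fin N → ℝ) → ℂ := fun y => (starRingEnd ℂ) (g0 y) * (⇑v) y with hh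
    have hIh : Integrable h volume := by
      have h1 : Integrable (fun y => (inner ℂ (w0 y) (v y) : ℂ)) volume :=
        MeasureTheory.L2.integrable_inner (𝕜 := ℂ) w0 v
      apply h1.congr
      filter_upwards [hmem0.coeFn_toLp] with y hy
      rw [hh]
      simp only [RCLike.inner_apply] at *
      rw [hy, mul_comm]
    have hp : ∀ p : Fin N → ℝ,
        (∫ y : Fin N → ℝ, Complex.exp (Complex.I * (dotN y p : ℝ)) * h y) = 0 := by
      intro p
      have hmemp := memW hA x p u
      set wp : Lp ℂ 2 (volume : Measure (Fin N → ℝ)) := hmemp.toLp _ with hwp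
      have hwpK : wp ∈ K := hinv u huK x p wp hmemp.coeFn_toLp
      have hz : (inner ℂ wp v : ℂ) = 0 := (Submodule.mem_orthogonal K v).mp hv wp hwpK
      rw [MeasureTheory.L2.inner_def] at hz
      have hz2 : (∫ y, (starRingEnd ℂ) (W A x p (⇑u) y) * (⇑v) y) = 0 := by
        rw [← hz]
        apply integral_congr_ae
        filter_upwards [hmemp.coeFn_toLp] with y hy
        rw [RCLike.inner_apply, hy, mul_comm]
      have hz3 : (∫ y, Complex.exp (Complex.I * (dotN ((2:ℝ)⁻¹ • x) p : ℝ)) *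
          (Complex.exp (Complex.I * (dotN y p : ℝ)) * h y)) = 0 := by
        rw [← hz2]
        apply integral_congr_ae
        filter_upwards with y
        rw [conjW_mul]
      rw [MeasureTheory.integral_const_mul] at hz3
      rcases mul_eq_zero.mp hz3 with h' | h'
      · exact absurd h' (Complex.exp_ne_zero _)
      · exact h'
    have hae := key_ae_zero hIh hp
    filter_upwards [hae] with y hy
    have : ‖h y‖ = ‖(⇑u) (y + x)‖ * ‖(⇑v) y‖ := by
      rw [hh]
      simp only [norm_mul, RCLike.norm_conj]
      rw [hg0]
      simp only [norm_mul, norm_lam, one_mul]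
    rw [← this, hy, norm_zero]
  -- lintegral argument
  have hvae : (⇑v) =ᵐ[volume] 0 := by
    set f2 : (Fin N → ℝ) → (Fin N → ℝ) → ℝ≥0∞ :=
      fun x y => (‖(⇑u) (y + x)‖₊ : ℝ≥0∞) * (‖(⇑v) y‖₊ : ℝ≥0∞) with hf2
    have hu_meas : Measurable (⇑u) := (Lp.stronglyMeasurable u).measurable
    have hv_meas : Measurable (⇑v) := (Lp.stronglyMeasurable v).measurable
    have hmeas : Measurable (Function.uncurry f2) := by
      change Measurable ((fun q : (Fin N → ℝ) × (Fin N → ℝ) => (‖(⇑u) (q.2 + q.1)‖₊ : ℝ≥0∞)) *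
        (fun q : (Fin N → ℝ) × (Fin N → ℝ) => (‖(⇑v) q.2‖₊ : ℝ≥0∞)))
      apply Measurable.mul
      · exact (hu_meas.comp (measurable_snd.add measurable_fst)).nnnorm.coe_nnreal_ennreal
      · exact (hv_meas.comp measurable_snd).nnnorm.coe_nnreal_ennreal
    have hzero : ∀ x, (∫⁻ y, f2 x y) = 0 := by
      intro x
      have : ∀ᵐ y : Fin N → ℝ, f2 x y = 0 := by
        filter_upwards [main x] with y hy
        rcases mul_eq_zero.mp hy with h' | h' <;>
          · have := norm_eq_zero.mp h'
            simp [hf2, this]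
      rw [lintegral_congr_ae this, lintegral_zero]
    set Iu : ℝ≥0∞ := ∫⁻ z, (‖(⇑u) z‖₊ : ℝ≥0∞) with hIu
    have hIu0 : Iu ≠ 0 := by
      intro hcontra
      apply hu0
      rw [Lp.eq_zero_iff_ae_eq_zero]
      have := (lintegral_eq_zero_iff hu_meas.nnnorm.coe_nnreal_ennreal).mp hcontra
      filter_upwards [this] with z hz
      simpa using hz
    have hswap : (∫⁻ y, ∫⁻ x, f2 x y) = 0 := by
      rw [← lintegral_lintegral_swap hmeas.aemeasurable]
      simp [hzero]
    have hinn : ∀ y, (∫⁻ x, f2 x y) = Iu * (‖(⇑v) y‖₊ : ℝ≥0∞) := by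
      intro y
      have e1 : (∫⁻ x, (‖(⇑u) (y + x)‖₊ : ℝ≥0∞) * (‖(⇑v) y‖₊ : ℝ≥0∞))
          = (∫⁻ x, (‖(⇑u) (y + x)‖₊ : ℝ≥0∞)) * (‖(⇑v) y‖₊ : ℝ≥0∞) :=
        lintegral_mul_const _
          ((hu_meas.comp (measurable_id.const_add y)).nnnorm.coe_nnreal_ennreal)
      have e2 : (∫⁻ x, (‖(⇑u) (y + x)‖₊ : ℝ≥0∞)) = Iu :=
        (measurePreserving_add_left volume y).lintegral_comp
          hu_meas.nnnorm.coe_nnreal_ennreal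
      show (∫⁻ x, (‖(⇑u) (y + x)‖₊ : ℝ≥0∞) * (‖(⇑v) y‖₊ : ℝ≥0∞)) = _
      rw [e1, e2, mul_comm]
    have hfin : (∫⁻ y, Iu * (‖(⇑v) y‖₊ : ℝ≥0∞)) = 0 := by
      rw [← hswap]
      exact lintegral_congr fun y => (hinn y).symm
    have hvz := (lintegral_eq_zero_iff
      (measurable_const.mul hv_meas.nnnorm.coe_nnreal_ennreal)).mp hfin
    filter_upwards [hvz] with y hy
    rcases mul_eq_zero.mp hy with h' | h'
    · exact absurd h' hIu0
    · simpa using h'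
  rw [Lp.eq_zero_iff_ae_eq_zero]
  exact hvae

end Main
/-- irreducibility of the magnetic Weyl system: a closed subspace of
`L²(ℝ^N)` invariant under all `W^A(x,p)` is `{0}` or the whole space. -/
theorem stmt8 {N : ℕ} (hN : 1 ≤ N) (A : (Fin N → ℝ) → (Fin N → ℝ))
    (hA : Continuous A) (K : Submodule ℂ (Lp ℂ 2 (volume : Measure (Fin N → ℝ))))
    (hK : IsClosed (K : Set (Lp ℂ 2 (volume : Measure (Fin N → ℝ)))))
    (hinv : ∀ u ∈ K, ∀ x p : Fin N → ℝ,
      ∀ w : Lp ℂ 2 (volume : Measure (Fin N → ℝ)),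
        (∀ᵐ y : Fin N → ℝ, w y = W A x p (⇑u) y) → w ∈ K) :
    K = ⊥ ∨ K = ⊤ := by
  by_cases hbot : K = ⊥
  · exact Or.inl hbot
  · exact Or.inr (stmt8_main A hA K hK hinv hbot)
end
end

section
/- Let N ≥ 1, let A : ℝ^N → ℝ^N be of class C³, fix x, p ∈ ℝ^N, and define τ : ℝ^N → ℝ by τ(y) := y·(p − ∫_{−1/2}^{1/2} A(x+ty) dt). Then for all j, k, l ∈ {1,…,N}: (∂_{y_l} ∂_{y_k} ∂_{y_j} τ)(0) = −(1/12) (∂_k ∂_j A_l + ∂_l ∂_j A_k + ∂_l ∂_k A_j)(x). (In particular this third derivative is in general nonzero, so the magnetic quantization Op^A and the naively minimally coupled Weyl quantization already differ on polynomials of degree 3 in p.) -/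
open MeasureTheory Complex Real Filter
open scoped BigOperators ENNReal

noncomputable section

set_option maxHeartbeats 1000000 in
set_option synthInstance.maxHeartbeats 400000 in

lemma key_param {n : ℕ} {E : Type*} [NormedAddCommGroup E] [NormedSpace ℝ E] [CompleteSpace E]
    (g : (Fin n → ℝ) → E) (hg : ContDiff ℝ 1 g) (x : Fin n → ℝ) (m : ℕ) (y₀ : Fin n → ℝ) :
    HasFDerivAt (fun y : Fin n → ℝ => ∫ t in (-(1:ℝ)/2)..(1/2 : ℝ), t ^ m • g (x + t • y))
      (∫ t in (-(1:ℝ)/2)..(1/2 : ℝ), t ^ (m+1) • fderiv ℝ g (x + t • y₀)) y₀ := by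
  have hgd : Differentiable ℝ g := hg.differentiable one_ne_zero
  have hgc : Continuous g := hg.continuous
  have hg'c : Continuous (fderiv ℝ g) := hg.continuous_fderiv one_ne_zero
  -- compactness bound
  set K : Set (Fin n → ℝ) :=
    (fun q : ℝ × (Fin n → ℝ) => x + q.1 • q.2) ''
      (Set.uIcc (-(1:ℝ)/2) (1/2 : ℝ) ×ˢ Metric.closedBall y₀ 1) with hK
  have hKc : IsCompact K :=
    ((isCompact_uIcc).prod (isCompact_closedBall _ _)).image (by fun_prop)
  obtain ⟨C, hC⟩ : ∃ C, ∀ z ∈ K, ‖fderiv ℝ g z‖ ≤ C :=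
    hKc.exists_bound_of_continuousOn hg'c.continuousOn
  have key := intervalIntegral.hasFDerivAt_integral_of_dominated_of_fderiv_le
    (𝕜 := ℝ) (μ := volume) (a := (-(1:ℝ)/2)) (b := (1/2 : ℝ))
    (F := fun (y : Fin n → ℝ) t => t ^ m • g (x + t • y))
    (F' := fun (y : Fin n → ℝ) t => t ^ (m+1) • fderiv ℝ g (x + t • y))
    (x₀ := y₀) (bound := fun _ => max C 0) (s := Metric.ball y₀ 1) (Metric.ball_mem_nhds y₀ one_pos)
    ?_ ?_ ?_ ?_ ?_ ?_
  · exact key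
  · filter_upwards with y
    exact ((continuous_pow m).smul (hgc.comp (by fun_prop))).aestronglyMeasurable
  · exact ((continuous_pow m).smul (hgc.comp (by fun_prop))).intervalIntegrable _ _
  · exact ((continuous_pow (m+1)).smul (hg'c.comp (by fun_prop))).aestronglyMeasurable
  · filter_upwards with t ht y hy
    have htm : t ∈ Set.uIcc (-(1:ℝ)/2) (1/2 : ℝ) := Set.uIoc_subset_uIcc ht
    have hmem : x + t • y ∈ K := ⟨(t, y), ⟨htm, Metric.ball_subset_closedBall hy⟩, rfl⟩
    have habs : |t| ≤ 1 := by
      rw [Set.uIcc_of_le (by norm_num)] at htm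
      rw [abs_le]; constructor <;> [linarith [htm.1]; linarith [htm.2]]
    refine le_trans (ContinuousLinearMap.opNorm_smul_le _ _) ?_
    rw [Real.norm_eq_abs, _root_.abs_pow]
    calc |t| ^ (m+1) * ‖fderiv ℝ g (x + t • y)‖
        ≤ 1 * max C 0 :=
          mul_le_mul (pow_le_one₀ (abs_nonneg t) habs)
            (le_trans (hC _ hmem) (le_max_left _ _)) (norm_nonneg _) one_pos.le
      _ = max C 0 := one_mul _
  · exact intervalIntegrable_const
  · filter_upwards with t ht y hy
    have h1 : HasFDerivAt (fun y : Fin n → ℝ => x + t • y)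
        (t • ContinuousLinearMap.id ℝ (Fin n → ℝ)) y := by
      exact ((hasFDerivAt_id y).const_smul t).const_add x
    have h2 := ((hgd (x + t • y)).hasFDerivAt.comp y h1).const_smul (t ^ m)
    convert h2 using 1
    · rfl
    ext v
    simp only [ContinuousLinearMap.smul_apply, ContinuousLinearMap.coe_comp',
      Function.comp_apply, ContinuousLinearMap.id_apply, _root_.map_smul, smul_smul, pow_succ]

def Faux {N : ℕ} (A : (Fin N → ℝ) → (Fin N → ℝ)) (x : Fin N → ℝ) (i : Fin N)
    (y : Fin N → ℝ) : ℝ :=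
  ∫ t in (-(1:ℝ)/2)..(1/2 : ℝ), A (x + t • y) i

def M1aux {N : ℕ} (A : (Fin N → ℝ) → (Fin N → ℝ)) (x : Fin N → ℝ) (i : Fin N)
    (y : Fin N → ℝ) : (Fin N → ℝ) →L[ℝ] ℝ :=
  ∫ t in (-(1:ℝ)/2)..(1/2 : ℝ), t ^ 1 • fderiv ℝ (fun w => A w i) (x + t • y)

def M2aux {N : ℕ} (A : (Fin N → ℝ) → (Fin N → ℝ)) (x : Fin N → ℝ) (i : Fin N)
    (y : Fin N → ℝ) : (Fin N → ℝ) →L[ℝ] ((Fin N → ℝ) →L[ℝ] ℝ) :=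
  ∫ t in (-(1:ℝ)/2)..(1/2 : ℝ), t ^ 2 • fderiv ℝ (fderiv ℝ (fun w => A w i)) (x + t • y)

lemma contDiff_comp_proj {N : ℕ} {A : (Fin N → ℝ) → (Fin N → ℝ)} (hA : ContDiff ℝ 3 A)
    (i : Fin N) : ContDiff ℝ 3 (fun w => A w i) :=
  (ContinuousLinearMap.proj i : (Fin N → ℝ) →L[ℝ] ℝ).contDiff.comp hA

lemma hasFDerivAt_Faux {N : ℕ} {A : (Fin N → ℝ) → (Fin N → ℝ)} (hA : ContDiff ℝ 3 A)
    (x : Fin N → ℝ) (i : Fin N) (y : Fin N → ℝ) :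
    HasFDerivAt (Faux A x i) (M1aux A x i y) y := by
  have h := key_param (fun w => A w i) ((contDiff_comp_proj hA i).of_le (by norm_num)) x 0 y
  have e : Faux A x i = fun y : Fin N → ℝ =>
      ∫ t in (-(1:ℝ)/2)..(1/2 : ℝ), t ^ 0 • A (x + t • y) i := by
    funext y; unfold Faux; congr 1; funext t; rw [pow_zero, one_smul]
  rw [e]; exact h

lemma hasFDerivAt_M1aux {N : ℕ} {A : (Fin N → ℝ) → (Fin N → ℝ)} (hA : ContDiff ℝ 3 A)
    (x : Fin N → ℝ) (i : Fin N) (y : Fin N → ℝ) :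
    HasFDerivAt (M1aux A x i) (M2aux A x i y) y := by
  have h := key_param (fderiv ℝ (fun w => A w i))
    ((contDiff_comp_proj hA i).fderiv_right (m := 1) (by norm_num)) x 1 y
  exact h

instance instNACG2 {N : ℕ} :
    NormedAddCommGroup ((Fin N → ℝ) →L[ℝ] (Fin N → ℝ) →L[ℝ] ℝ) :=
  inferInstance

instance instNS2 {N : ℕ} :
    NormedSpace ℝ ((Fin N → ℝ) →L[ℝ] (Fin N → ℝ) →L[ℝ] ℝ) :=
  inferInstance

lemma hasFDerivAt_M2aux {N : ℕ} {A : (Fin N → ℝ) → (Fin N → ℝ)} (hA : ContDiff ℝ 3 A)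
    (x : Fin N → ℝ) (i : Fin N) (y : Fin N → ℝ) :
    HasFDerivAt (M2aux A x i)
      (∫ t in (-(1:ℝ)/2)..(1/2 : ℝ),
        t ^ 3 • fderiv ℝ (fderiv ℝ (fderiv ℝ (fun w => A w i))) (x + t • y)) y := by
  have h := key_param (fderiv ℝ (fderiv ℝ (fun w => A w i)))
    (((contDiff_comp_proj hA i).fderiv_right (m := 2) (by norm_num)).fderiv_right (m := 1)
      (by norm_num)) x 2 y
  exact h

lemma M2aux_zero {N : ℕ} {A : (Fin N → ℝ) → (Fin N → ℝ)}
    (x : Fin N → ℝ) (i : Fin N) :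
    M2aux A x i 0 = ((1:ℝ)/12) • fderiv ℝ (fderiv ℝ (fun w => A w i)) x := by
  unfold M2aux
  simp only [smul_zero, add_zero]
  rw [intervalIntegral.integral_smul_const (fun t : ℝ => t ^ 2)
    (fderiv ℝ (fderiv ℝ (fun w => A w i)) x)]
  norm_num [integral_pow]

/-- for `τ(y) = y·(p − ∫_{−1/2}^{1/2} A(x+ty)dt)`, the third derivative
at `0` equals `−(1/12)(∂_k∂_jA_l + ∂_l∂_jA_k + ∂_l∂_kA_j)(x)`; hence the magnetic and
the naively minimally coupled quantizations already differ on polynomials of degree 3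
in `p`. -/
theorem stmt13 {N : ℕ} (hN : 1 ≤ N) (A : (Fin N → ℝ) → (Fin N → ℝ))
    (hA : ContDiff ℝ 3 A) (x p : Fin N → ℝ) (τ : (Fin N → ℝ) → ℝ)
    (hτ : ∀ y : Fin N → ℝ,
      τ y = dotN y (p - ∫ t in (-(1:ℝ)/2)..(1/2 : ℝ), A (x + t • y))) :
    ∀ j k l : Fin N,
      fderiv ℝ (fun y =>
          fderiv ℝ (fun y' => fderiv ℝ τ y' (Pi.single j 1)) y (Pi.single k 1)) 0
          (Pi.single l 1) =
        -(1/12) *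
          (fderiv ℝ (fun z => fderiv ℝ (fun w => A w l) z (Pi.single j 1)) x
              (Pi.single k 1) +
           fderiv ℝ (fun z => fderiv ℝ (fun w => A w k) z (Pi.single j 1)) x
              (Pi.single l 1) +
           fderiv ℝ (fun z => fderiv ℝ (fun w => A w j) z (Pi.single k 1)) x
              (Pi.single l 1)) := by
  intro j k l
  -- Step A: rewrite τ
  have hτeq : τ = fun y => ∑ i, y i * (p i - Faux A x i y) := by
    funext y
    rw [hτ y]
    have hint : IntervalIntegrable (fun t => A (x + t • y)) volume (-(1:ℝ)/2) (1/2 : ℝ) :=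
      (hA.continuous.comp (by fun_prop)).intervalIntegrable _ _
    have hcomp : ∀ i : Fin N,
        (∫ t in (-(1:ℝ)/2)..(1/2 : ℝ), A (x + t • y)) i = Faux A x i y := by
      intro i
      have h := (ContinuousLinearMap.proj i :
        (Fin N → ℝ) →L[ℝ] ℝ).intervalIntegral_comp_comm hint
      simpa [Faux] using h.symm
    simp only [dotN, Pi.sub_apply, hcomp]
  -- derivative facts
  have hFd : ∀ (i : Fin N) (y : Fin N → ℝ), HasFDerivAt (Faux A x i) (M1aux A x i y) y :=
    fun i y => hasFDerivAt_Faux hA x i y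
  have hM1d : ∀ (i : Fin N) (y : Fin N → ℝ), HasFDerivAt (M1aux A x i) (M2aux A x i y) y :=
    fun i y => hasFDerivAt_M1aux hA x i y
  -- Step B: first derivative of τ
  have hτd : ∀ y : Fin N → ℝ, HasFDerivAt τ
      (∑ i, (y i • -(M1aux A x i y) +
        (p i - Faux A x i y) • (ContinuousLinearMap.proj i : (Fin N → ℝ) →L[ℝ] ℝ))) y := by
    intro y
    rw [hτeq]
    exact HasFDerivAt.fun_sum fun i _ =>
      ((ContinuousLinearMap.proj i : (Fin N → ℝ) →L[ℝ] ℝ).hasFDerivAt).mul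
        ((hFd i y).const_sub (p i))
  have hτval : (fun y' => fderiv ℝ τ y' (Pi.single j 1)) =
      fun y => (p j - Faux A x j y) - ∑ i, y i * (M1aux A x i y (Pi.single j 1)) := by
    funext y
    rw [(hτd y).fderiv]
    simp only [ContinuousLinearMap.coe_sum', Finset.sum_apply,
      ContinuousLinearMap.add_apply, ContinuousLinearMap.smul_apply,
      ContinuousLinearMap.neg_apply, ContinuousLinearMap.proj_apply, smul_eq_mul,
      Pi.single_apply, mul_ite, mul_one, mul_zero, Finset.sum_add_distrib,
      Finset.sum_ite_eq', Finset.mem_univ, if_true, mul_neg, Finset.sum_neg_distrib]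
    ring
  rw [hτval]
  -- Step C: second derivative
  have hevM1 : ∀ (i : Fin N) (y : Fin N → ℝ) (v : Fin N → ℝ),
      HasFDerivAt (fun y' => M1aux A x i y' v) ((M2aux A x i y).flip v) y := by
    intro i y v
    have h := (hM1d i y).clm_apply (hasFDerivAt_const v y)
    simpa using h
  have hφd : ∀ y : Fin N → ℝ, HasFDerivAt
      (fun y => (p j - Faux A x j y) - ∑ i, y i * (M1aux A x i y (Pi.single j 1)))
      ((-(M1aux A x j y)) - ∑ i, (y i • ((M2aux A x i y).flip (Pi.single j 1)) +
        (M1aux A x i y (Pi.single j 1)) •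
          (ContinuousLinearMap.proj i : (Fin N → ℝ) →L[ℝ] ℝ))) y := by
    intro y
    exact ((hFd j y).const_sub (p j)).sub (HasFDerivAt.fun_sum fun i _ =>
      ((ContinuousLinearMap.proj i : (Fin N → ℝ) →L[ℝ] ℝ).hasFDerivAt).mul
        (hevM1 i y (Pi.single j 1)))
  have hφval : (fun y => fderiv ℝ
        (fun y' => (p j - Faux A x j y') - ∑ i, y' i * (M1aux A x i y' (Pi.single j 1)))
        y (Pi.single k 1)) =
      fun y => -(M1aux A x j y (Pi.single k 1)) -
        ((M1aux A x k y (Pi.single j 1)) +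
          ∑ i, y i * (M2aux A x i y (Pi.single k 1) (Pi.single j 1))) := by
    funext y
    rw [(hφd y).fderiv]
    simp only [ContinuousLinearMap.sub_apply, ContinuousLinearMap.neg_apply,
      ContinuousLinearMap.coe_sum', Finset.sum_apply, ContinuousLinearMap.add_apply,
      ContinuousLinearMap.smul_apply, ContinuousLinearMap.flip_apply,
      ContinuousLinearMap.proj_apply, smul_eq_mul, Pi.single_apply, mul_ite, mul_one,
      mul_zero, Finset.sum_add_distrib, Finset.sum_ite_eq', Finset.mem_univ, if_true]
    ring
  rw [hφval]
  -- Step D: third derivative at 0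
  have hevM2 : ∀ (i : Fin N) (v w : Fin N → ℝ), ∃ D : (Fin N → ℝ) →L[ℝ] ℝ, HasFDerivAt
      (fun y' => M2aux A x i y' v w) D (0 : Fin N → ℝ) := by
    intro i v w
    have h1 := (hasFDerivAt_M2aux hA x i 0).clm_apply (hasFDerivAt_const v (0 : Fin N → ℝ))
    have h2 := h1.clm_apply (hasFDerivAt_const w (0 : Fin N → ℝ))
    exact ⟨_, h2⟩
  choose D hD using fun i => hevM2 i (Pi.single k 1) (Pi.single j 1)
  have hψd : HasFDerivAt
      (fun y => -(M1aux A x j y (Pi.single k 1)) -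
        ((M1aux A x k y (Pi.single j 1)) +
          ∑ i, y i * (M2aux A x i y (Pi.single k 1) (Pi.single j 1))))
      ((-((M2aux A x j 0).flip (Pi.single k 1))) -
        (((M2aux A x k 0).flip (Pi.single j 1)) +
          ∑ i, ((0 : Fin N → ℝ) i • D i +
            (M2aux A x i 0 (Pi.single k 1) (Pi.single j 1)) •
              (ContinuousLinearMap.proj i : (Fin N → ℝ) →L[ℝ] ℝ)))) (0 : Fin N → ℝ) := by
    exact ((hevM1 j 0 (Pi.single k 1)).neg).sub
      (((hevM1 k 0 (Pi.single j 1))).add (HasFDerivAt.fun_sum fun i _ =>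
        ((ContinuousLinearMap.proj i : (Fin N → ℝ) →L[ℝ] ℝ).hasFDerivAt).mul (hD i)))
  rw [hψd.fderiv]
  -- evaluate and finish
  have hCval : ∀ (i a b : Fin N),
      fderiv ℝ (fderiv ℝ (fun w => A w i)) x (Pi.single a 1) (Pi.single b 1) =
      fderiv ℝ (fun z => fderiv ℝ (fun w => A w i) z (Pi.single b 1)) x (Pi.single a 1) := by
    intro i a b
    have hdiff : HasFDerivAt (fderiv ℝ (fun w => A w i))
        (fderiv ℝ (fderiv ℝ (fun w => A w i)) x) x := by
      have h2 : ContDiff ℝ 2 (fderiv ℝ (fun w => A w i)) :=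
        (contDiff_comp_proj hA i).fderiv_right (m := 2) (by norm_num)
      exact (h2.differentiable (by norm_num) x).hasFDerivAt
    have h := hdiff.clm_apply (hasFDerivAt_const (Pi.single b 1) x)
    rw [h.fderiv]
    simp
  simp only [ContinuousLinearMap.sub_apply, ContinuousLinearMap.neg_apply,
    ContinuousLinearMap.add_apply, ContinuousLinearMap.coe_sum', Finset.sum_apply,
    ContinuousLinearMap.smul_apply, ContinuousLinearMap.flip_apply,
    ContinuousLinearMap.proj_apply, Pi.zero_apply, zero_smul, zero_add, smul_eq_mul,
    Pi.single_apply, mul_ite, mul_one, mul_zero, Finset.sum_ite_eq', Finset.mem_univ,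
    if_true, M2aux_zero x]
  rw [← hCval l k j, ← hCval k l j, ← hCval j l k]
  ring
end
end

section
/- Let N ≥ 1 and let B : ℝ^N → M_N(ℝ) be a map with antisymmetric values whose components are of class C^∞_pol. Denote by (u,v) := ∫_{ℝ^{2N}} u(ξ) v(ξ) dξ the bilinear pairing. Then for all f, g, h ∈ S(ℝ^{2N}): (f∘^B g, h) = (f, g∘^B h) = (g, h∘^B f). -/
open MeasureTheory Complex Real Filter
open scoped BigOperators ENNReal

noncomputable section

section Aux17
open Set SchwartzMap

lemma tri_swap (F : ℝ → ℝ → ℝ) (hF : Continuous fun p : ℝ × ℝ => F p.1 p.2) :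
    ∫ s in (0:ℝ)..1, ∫ t in (0:ℝ)..s, F s t = ∫ t in (0:ℝ)..1, ∫ s in t..1, F s t := by
  set T : Set (ℝ × ℝ) := {p | 0 ≤ p.2 ∧ p.2 ≤ p.1 ∧ p.1 ≤ 1} with hT
  have hTc : IsClosed T := by
    refine (isClosed_le continuous_const continuous_snd).inter
      ((isClosed_le continuous_snd continuous_fst).inter
        (isClosed_le continuous_fst continuous_const))
  have hTm : MeasurableSet T := hTc.measurableSet
  have hTK : IsCompact T := by
    refine ((isCompact_Icc (a:=(0:ℝ)) (b:=1)).prod (isCompact_Icc (a:=(0:ℝ)) (b:=1))).of_isClosed_subset hTc ?_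
    rintro ⟨s, t⟩ ⟨h1, h2, h3⟩
    exact ⟨⟨le_trans h1 h2, h3⟩, ⟨h1, le_trans h2 h3⟩⟩
  set J : ℝ × ℝ → ℝ := T.indicator (fun p => F p.1 p.2) with hJdef
  have hJ : Integrable J := by
    rw [hJdef, integrable_indicator_iff hTm]
    exact hF.continuousOn.integrableOn_compact hTK
  -- left side
  have hL : ∫ s in (0:ℝ)..1, ∫ t in (0:ℝ)..s, F s t = ∫ s : ℝ, ∫ t : ℝ, J (s, t) := by
    have hgL0 : ∀ s : ℝ, s ∉ Ioc (0:ℝ) 1 → (∫ t : ℝ, J (s, t)) = 0 := by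
      intro s hs
      rcases lt_or_ge (1:ℝ) s with h1 | h1
      · have : (fun t : ℝ => J (s, t)) = fun _ => 0 := by
          funext t
          exact indicator_of_notMem (fun hp => absurd hp.2.2 (not_le.2 h1)) _
        rw [this, integral_zero]
      · have h0 : s ≤ 0 := by
          by_contra hc
          exact hs ⟨not_le.1 hc, h1⟩
        have heq : (fun t : ℝ => J (s, t)) = (Icc (0:ℝ) s).indicator (fun t => F s t) := by
          funext t
          simp only [hJdef, indicator_apply, hT, mem_setOf_eq, mem_Icc]
          by_cases h : 0 ≤ t ∧ t ≤ s
          · rw [if_pos ⟨h.1, h.2, le_trans h0 zero_le_one⟩, if_pos h]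
          · rw [if_neg (fun hp => h ⟨hp.1, hp.2.1⟩), if_neg h]
        rw [heq, integral_indicator measurableSet_Icc]
        have : volume (Icc (0:ℝ) s) = 0 := by
          rcases eq_or_lt_of_le h0 with h | h
          · rw [← h]; simp
          · rw [Icc_eq_empty (not_le.2 h)]; simp
        rw [show (volume.restrict (Icc (0:ℝ) s)) = 0 from Measure.restrict_eq_zero.2 this, integral_zero_measure]
    have hgL1 : ∀ s ∈ Ioc (0:ℝ) 1, (∫ t : ℝ, J (s, t)) = ∫ t in (0:ℝ)..s, F s t := by
      intro s hs
      have heq : (fun t : ℝ => J (s, t)) = (Icc (0:ℝ) s).indicator (fun t => F s t) := by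
        funext t
        simp only [hJdef, indicator_apply, hT, mem_setOf_eq, mem_Icc]
        by_cases h : 0 ≤ t ∧ t ≤ s
        · rw [if_pos ⟨h.1, h.2, hs.2⟩, if_pos h]
        · rw [if_neg (fun hp => h ⟨hp.1, hp.2.1⟩), if_neg h]
      rw [heq, integral_indicator measurableSet_Icc, integral_Icc_eq_integral_Ioc,
        intervalIntegral.integral_of_le hs.1.le]
    have : (fun s : ℝ => ∫ t : ℝ, J (s, t)) =
        (Ioc (0:ℝ) 1).indicator (fun s => ∫ t : ℝ, J (s, t)) := by
      funext s
      by_cases hs : s ∈ Ioc (0:ℝ) 1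
      · rw [indicator_of_mem hs]
      · rw [indicator_of_notMem hs, hgL0 s hs]
    rw [intervalIntegral.integral_of_le zero_le_one,
      setIntegral_congr_fun measurableSet_Ioc (fun s hs => (hgL1 s hs).symm),
      ← integral_indicator measurableSet_Ioc, ← this]
  have hR : ∫ t in (0:ℝ)..1, ∫ s in t..1, F s t = ∫ t : ℝ, ∫ s : ℝ, J (s, t) := by
    have hgR1 : ∀ t ∈ Ioc (0:ℝ) 1, (∫ s : ℝ, J (s, t)) = ∫ s in t..1, F s t := by
      intro t ht
      have heq : (fun s : ℝ => J (s, t)) = (Icc t 1).indicator (fun s => F s t) := by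
        funext s
        simp only [hJdef, indicator_apply, hT, mem_setOf_eq, mem_Icc]
        by_cases h : t ≤ s ∧ s ≤ 1
        · rw [if_pos ⟨ht.1.le, h.1, h.2⟩, if_pos h]
        · rw [if_neg (fun hp => h ⟨hp.2.1, hp.2.2⟩), if_neg h]
      rw [heq, integral_indicator measurableSet_Icc, integral_Icc_eq_integral_Ioc,
        intervalIntegral.integral_of_le ht.2]
    have hgR0 : ∀ t : ℝ, t ≠ 0 → t ∉ Ioc (0:ℝ) 1 → (∫ s : ℝ, J (s, t)) = 0 := by
      intro t ht0 ht
      have : (fun s : ℝ => J (s, t)) = fun _ => 0 := by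
        funext s
        refine indicator_of_notMem ?_ _
        rintro ⟨h1, h2, h3⟩
        exact ht ⟨lt_of_le_of_ne h1 (Ne.symm ht0), le_trans h2 h3⟩
      rw [this, integral_zero]
    have hae : (fun t : ℝ => ∫ s : ℝ, J (s, t)) =ᵐ[volume]
        (Ioc (0:ℝ) 1).indicator (fun t => ∫ s : ℝ, J (s, t)) := by
      have h0 : (volume : Measure ℝ) {(0:ℝ)} = 0 := measure_singleton 0
      filter_upwards [compl_mem_ae_iff.2 h0] with t ht
      by_cases hmem : t ∈ Ioc (0:ℝ) 1
      · rw [indicator_of_mem hmem]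
      · rw [indicator_of_notMem hmem, hgR0 t (by simpa using ht) hmem]
    rw [intervalIntegral.integral_of_le zero_le_one,
      setIntegral_congr_fun measurableSet_Ioc (fun t ht => (hgR1 t ht).symm),
      ← integral_indicator measurableSet_Ioc, ← integral_congr_ae hae]
  rw [hL, hR]
  exact integral_integral_swap (by exact hJ)

lemma bil_anti {N : ℕ} (M : Fin N → Fin N → ℝ) (hM : ∀ j k, M j k = - M k j)
    (u v : Fin N → ℝ) :
    ∑ j, ∑ k, M j k * v j * (-u - v) k = ∑ j, ∑ k, M j k * u j * v k := by
  have hvv : ∑ j, ∑ k, M j k * v j * v k = 0 := by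
    have h : ∑ j, ∑ k, M j k * v j * v k = -∑ j, ∑ k, M j k * v j * v k := by
      nth_rewrite 1 [Finset.sum_comm]
      rw [← Finset.sum_neg_distrib]
      refine Finset.sum_congr rfl fun j _ => ?_
      rw [← Finset.sum_neg_distrib]
      refine Finset.sum_congr rfl fun k _ => ?_
      rw [hM k j]; ring
    linarith
  have hvu : ∑ j, ∑ k, M j k * v j * (- u k) = ∑ j, ∑ k, M j k * u j * v k := by
    nth_rewrite 1 [Finset.sum_comm]
    refine Finset.sum_congr rfl fun j _ => Finset.sum_congr rfl fun k _ => ?_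
    rw [hM k j]; ring
  calc ∑ j, ∑ k, M j k * v j * (-u - v) k
      = ∑ j, ∑ k, (M j k * v j * (- u k) + M j k * v j * (- v k)) := by
        refine Finset.sum_congr rfl fun j _ => Finset.sum_congr rfl fun k _ => ?_
        simp only [Pi.sub_apply, Pi.neg_apply]; ring
    _ = (∑ j, ∑ k, M j k * v j * (- u k)) + ∑ j, ∑ k, M j k * v j * (- v k) := by
        rw [← Finset.sum_add_distrib]
        exact Finset.sum_congr rfl fun j _ => Finset.sum_add_distrib
    _ = ∑ j, ∑ k, M j k * u j * v k := by
        have : ∑ j, ∑ k, M j k * v j * (- v k) = 0 := by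
          rw [← neg_eq_zero, ← hvv, ← Finset.sum_neg_distrib]
          exact Finset.sum_congr rfl fun j _ => by rw [← Finset.sum_neg_distrib]; exact Finset.sum_congr rfl fun k _ => by ring
        rw [this, add_zero, hvu]


lemma flux_cyc {N : ℕ} (B : (Fin N → ℝ) → Fin N → Fin N → ℝ)
    (hanti : ∀ (z : Fin N → ℝ) (j k : Fin N), B z j k = - B z k j)
    (hBc : ∀ j k : Fin N, Continuous fun z => B z j k) (a b c : Fin N → ℝ) :
    flux B a b c = flux B b c a := by
  obtain ⟨u, hu⟩ : ∃ w : Fin N → ℝ, w = b - a := ⟨_, rfl⟩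
  obtain ⟨v, hv⟩ : ∃ w : Fin N → ℝ, w = c - b := ⟨_, rfl⟩
  obtain ⟨G, hG⟩ : ∃ G : ℝ → ℝ → ℝ,
      G = fun s t => ∑ j, ∑ k, B (a + s • u + t • v) j k * u j * v k := ⟨_, rfl⟩
  have hpath : Continuous fun p : ℝ × ℝ => a + p.1 • u + p.2 • v :=
    (continuous_const.add (continuous_fst.smul continuous_const)).add
      (continuous_snd.smul continuous_const)
  have hGc : Continuous fun p : ℝ × ℝ => G p.1 p.2 := by
    rw [hG]
    refine continuous_finset_sum _ fun j _ => continuous_finset_sum _ fun k _ => ?_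
    exact (((hBc j k).comp hpath).mul continuous_const).mul continuous_const
  have hw : a - c = -u - v := by
    rw [hu, hv]; funext i; simp only [Pi.sub_apply, Pi.neg_apply]; ring
  have hcb : c - b = v := hv.symm
  have hpoint : ∀ s t : ℝ, b + s • v + t • (-u - v) = a + (1 - t) • u + (s - t) • v := by
    intro s t
    rw [hu, hv]; funext i
    simp only [Pi.add_apply, Pi.smul_apply, Pi.sub_apply, Pi.neg_apply, smul_eq_mul]
    ring
  have hpt : ∀ s t : ℝ,
      (∑ j, ∑ k, B (b + s • (c - b) + t • (a - c)) j k * (c - b) j * (a - c) k)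
        = G (1 - t) (s - t) := by
    intro s t
    rw [hcb, hw, hpoint s t, hG]
    exact bil_anti _ (fun j k => hanti _ j k) u v
  have h1 : flux B b c a = ∫ s in (0:ℝ)..1, ∫ t in (0:ℝ)..s, G (1 - t) (s - t) := by
    rw [flux]
    exact intervalIntegral.integral_congr fun s _ =>
      intervalIntegral.integral_congr fun t _ => hpt s t
  have h2 : ∀ s : ℝ, (∫ t in (0:ℝ)..s, G (1 - t) (s - t)) = ∫ x in (0:ℝ)..s, G (1 - s + x) x := by
    intro s
    have := intervalIntegral.integral_comp_sub_left (a := (0:ℝ)) (b := s)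
      (fun x => G (1 - s + x) x) s
    simp only [sub_self, sub_zero] at this
    rw [← this]
    refine intervalIntegral.integral_congr fun t _ => ?_
    rw [show 1 - s + (s - t) = 1 - t by ring]
  have h3 : ∀ x : ℝ, (∫ s in x..(1:ℝ), G (1 - s + x) x) = ∫ y in x..(1:ℝ), G y x := by
    intro x
    have := intervalIntegral.integral_comp_sub_left (a := x) (b := (1:ℝ))
      (fun y => G y x) (1 + x)
    rw [show 1 + x - 1 = x by ring, show 1 + x - x = 1 by ring] at this
    rw [← this]
    refine intervalIntegral.integral_congr fun s _ => ?_
    rw [show 1 + x - s = 1 - s + x by ring]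
  have h0 : flux B a b c = ∫ s in (0:ℝ)..1, ∫ t in (0:ℝ)..s, G s t := by
    rw [flux, hG, hu, hv]
  rw [h0, h1, tri_swap G hGc]
  calc ∫ t in (0:ℝ)..1, ∫ s in t..(1:ℝ), G s t
      = ∫ x in (0:ℝ)..1, ∫ s in x..(1:ℝ), G (1 - s + x) x :=
        intervalIntegral.integral_congr fun x _ => (h3 x).symm
    _ = ∫ s in (0:ℝ)..1, ∫ x in (0:ℝ)..s, G (1 - s + x) x := by
        refine (tri_swap (fun s x => G (1 - s + x) x) ?_).symm
        exact hGc.comp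
          (((continuous_const.sub continuous_fst).add continuous_snd).prodMk continuous_snd)
    _ = ∫ s in (0:ℝ)..1, ∫ t in (0:ℝ)..s, G (1 - t) (s - t) :=
        intervalIntegral.integral_congr fun s _ => (h2 s).symm

lemma symp_cyc {N : ℕ} (ξ η ζ : (Fin N → ℝ) × (Fin N → ℝ)) :
    symp (ξ.1 - η.1, ξ.2 - η.2) (ξ.1 - ζ.1, ξ.2 - ζ.2)
      = symp (η.1 - ζ.1, η.2 - ζ.2) (η.1 - ξ.1, η.2 - ξ.2) := by
  simp only [symp, dotN, Pi.sub_apply, ← Finset.sum_sub_distrib]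
  exact Finset.sum_congr rfl fun i _ => by ring


lemma flux_cont {N : ℕ} (B : (Fin N → ℝ) → Fin N → Fin N → ℝ)
    (hBc : ∀ j k : Fin N, Continuous fun z => B z j k) :
    Continuous fun p : (Fin N → ℝ) × (Fin N → ℝ) × (Fin N → ℝ) =>
      flux B p.1 p.2.1 p.2.2 := by
  have hin : Continuous fun q : (((Fin N → ℝ) × (Fin N → ℝ) × (Fin N → ℝ)) × ℝ) × ℝ =>
      ∑ j, ∑ k, B (q.1.1.1 + q.1.2 • (q.1.1.2.1 - q.1.1.1) + q.2 • (q.1.1.2.2 - q.1.1.2.1)) j k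
        * (q.1.1.2.1 - q.1.1.1) j * (q.1.1.2.2 - q.1.1.2.1) k := by
    have hp : Continuous fun q : (((Fin N → ℝ) × (Fin N → ℝ) × (Fin N → ℝ)) × ℝ) × ℝ =>
        q.1.1.1 + q.1.2 • (q.1.1.2.1 - q.1.1.1) + q.2 • (q.1.1.2.2 - q.1.1.2.1) := by
      fun_prop
    refine continuous_finset_sum _ fun j _ => continuous_finset_sum _ fun k _ => ?_
    refine ((((hBc j k).comp hp).mul ?_).mul ?_) <;> fun_prop
  have hmid : Continuous fun q : ((Fin N → ℝ) × (Fin N → ℝ) × (Fin N → ℝ)) × ℝ =>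
      ∫ t in (0:ℝ)..q.2,
        ∑ j, ∑ k, B (q.1.1 + q.2 • (q.1.2.1 - q.1.1) + t • (q.1.2.2 - q.1.2.1)) j k
          * (q.1.2.1 - q.1.1) j * (q.1.2.2 - q.1.2.1) k := by
    exact intervalIntegral.continuous_parametric_intervalIntegral_of_continuous
      (f := fun (q : ((Fin N → ℝ) × (Fin N → ℝ) × (Fin N → ℝ)) × ℝ) (t : ℝ) =>
        ∑ j, ∑ k, B (q.1.1 + q.2 • (q.1.2.1 - q.1.1) + t • (q.1.2.2 - q.1.2.1)) j k
          * (q.1.2.1 - q.1.1) j * (q.1.2.2 - q.1.2.1) k)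
      hin continuous_snd
  exact intervalIntegral.continuous_parametric_intervalIntegral_of_continuous'
    (f := fun (p : (Fin N → ℝ) × (Fin N → ℝ) × (Fin N → ℝ)) (s : ℝ) =>
      ∫ t in (0:ℝ)..s,
        ∑ j, ∑ k, B (p.1 + s • (p.2.1 - p.1) + t • (p.2.2 - p.2.1)) j k
          * (p.2.1 - p.1) j * (p.2.2 - p.2.1) k)
    hmid 0 1

variable {N : ℕ}

noncomputable def KK (B : (Fin N → ℝ) → Fin N → Fin N → ℝ)
    (ξ η ζ : (Fin N → ℝ) × (Fin N → ℝ)) : ℂ :=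
  Complex.exp (-2 * Complex.I *
      (symp (ξ.1 - η.1, ξ.2 - η.2) (ξ.1 - ζ.1, ξ.2 - ζ.2) : ℝ)) *
    Complex.exp (-Complex.I *
      (flux B (ξ.1 - ζ.1 + η.1) (η.1 - ξ.1 + ζ.1) (ζ.1 - η.1 + ξ.1) : ℝ))


lemma norm_KK (B : (Fin N → ℝ) → Fin N → Fin N → ℝ) (ξ η ζ : (Fin N → ℝ) × (Fin N → ℝ)) :
    ‖KK B ξ η ζ‖ = 1 := by
  rw [KK, norm_mul, Complex.norm_exp,
    Complex.norm_exp]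
  simp [Complex.mul_re, Complex.mul_im]


lemma dotN_cont : Continuous fun p : (Fin N → ℝ) × (Fin N → ℝ) => dotN p.1 p.2 := by
  refine continuous_finset_sum _ fun i _ => ?_
  exact ((continuous_apply i).comp continuous_fst).mul ((continuous_apply i).comp continuous_snd)


set_option maxHeartbeats 1000000 in
lemma KK_cont (B : (Fin N → ℝ) → Fin N → Fin N → ℝ)
    (hBc : ∀ j k : Fin N, Continuous fun z => B z j k) :
    Continuous fun p : ((Fin N → ℝ) × (Fin N → ℝ)) × ((Fin N → ℝ) × (Fin N → ℝ)) ×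
        ((Fin N → ℝ) × (Fin N → ℝ)) => KK B p.1 p.2.1 p.2.2 := by
  simp only [KK]
  have symp_cont : Continuous fun q : ((Fin N → ℝ) × (Fin N → ℝ)) × ((Fin N → ℝ) × (Fin N → ℝ)) =>
      symp q.1 q.2 := by
    simp only [symp]
    exact (dotN_cont.comp (by fun_prop : Continuous fun q : ((Fin N → ℝ) × (Fin N → ℝ)) ×
        ((Fin N → ℝ) × (Fin N → ℝ)) => (q.2.1, q.1.2))).sub
      (dotN_cont.comp (by fun_prop : Continuous fun q : ((Fin N → ℝ) × (Fin N → ℝ)) ×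
        ((Fin N → ℝ) × (Fin N → ℝ)) => (q.1.1, q.2.2)))
  have h12 : Continuous fun p : ((Fin N → ℝ) × (Fin N → ℝ)) × ((Fin N → ℝ) × (Fin N → ℝ)) ×
      ((Fin N → ℝ) × (Fin N → ℝ)) =>
        (((p.1.1 - p.2.1.1 : Fin N → ℝ), (p.1.2 - p.2.1.2 : Fin N → ℝ)),
          ((p.1.1 - p.2.2.1 : Fin N → ℝ), (p.1.2 - p.2.2.2 : Fin N → ℝ))) := by
    fun_prop
  have h3 : Continuous fun p : ((Fin N → ℝ) × (Fin N → ℝ)) × ((Fin N → ℝ) × (Fin N → ℝ)) ×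
      ((Fin N → ℝ) × (Fin N → ℝ)) =>
        ((p.1.1 - p.2.2.1 + p.2.1.1 : Fin N → ℝ),
          ((p.2.1.1 - p.1.1 + p.2.2.1 : Fin N → ℝ), (p.2.2.1 - p.2.1.1 + p.1.1 : Fin N → ℝ))) := by
    fun_prop
  have hs : Continuous fun p : ((Fin N → ℝ) × (Fin N → ℝ)) × ((Fin N → ℝ) × (Fin N → ℝ)) ×
      ((Fin N → ℝ) × (Fin N → ℝ)) =>
      symp ((p.1.1 - p.2.1.1, p.1.2 - p.2.1.2)) ((p.1.1 - p.2.2.1, p.1.2 - p.2.2.2)) := by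
    simpa only [Function.comp_def] using symp_cont.comp h12
  have hc : Continuous fun p : ((Fin N → ℝ) × (Fin N → ℝ)) × ((Fin N → ℝ) × (Fin N → ℝ)) ×
      ((Fin N → ℝ) × (Fin N → ℝ)) =>
      flux B (p.1.1 - p.2.2.1 + p.2.1.1) (p.2.1.1 - p.1.1 + p.2.2.1) (p.2.2.1 - p.2.1.1 + p.1.1) := by
    simpa only [Function.comp_def] using (flux_cont B hBc).comp h3
  refine Continuous.mul ?_ ?_
  · exact Complex.continuous_exp.comp (continuous_const.mul (Complex.continuous_ofReal.comp hs))
  · exact Complex.continuous_exp.comp (continuous_const.mul (Complex.continuous_ofReal.comp hc))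

lemma KK_cyc {N : ℕ} (B : (Fin N → ℝ) → Fin N → Fin N → ℝ)
    (hanti : ∀ (z : Fin N → ℝ) (j k : Fin N), B z j k = - B z k j)
    (hBc : ∀ j k : Fin N, Continuous fun z => B z j k)
    (ξ η ζ : (Fin N → ℝ) × (Fin N → ℝ)) : KK B ξ η ζ = KK B η ζ ξ := by
  rw [KK, KK, symp_cyc ξ η ζ,
    flux_cyc B hanti hBc (ξ.1 - ζ.1 + η.1) (η.1 - ξ.1 + ζ.1) (ζ.1 - η.1 + ξ.1)]

instance volTemp {N : ℕ} :
    (volume : Measure ((Fin N → ℝ) × (Fin N → ℝ))).HasTemperateGrowth := by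
  rw [Measure.volume_eq_prod]
  have : ((volume : Measure (Fin N → ℝ)).prod (volume : Measure (Fin N → ℝ))).IsAddHaarMeasure :=
    Measure.prod.instIsAddHaarMeasure _ _
  infer_instance

section main
variable (B : (Fin N → ℝ) → Fin N → Fin N → ℝ)

local notation "Ξ" => (Fin N → ℝ) × (Fin N → ℝ)

lemma moyal_KK (f g : SchwartzMap ((Fin N → ℝ) × (Fin N → ℝ)) ℂ) (ξ : Ξ) :
    moyal B (⇑f) (⇑g) ξ
      = ((π ^ (2 * N))⁻¹ : ℝ) * ∫ η : Ξ, ∫ ζ : Ξ, KK B ξ η ζ * f η * g ζ := rfl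

lemma hsec (hBc : ∀ j k : Fin N, Continuous fun z => B z j k)
    (f g : SchwartzMap ((Fin N → ℝ) × (Fin N → ℝ)) ℂ) (ξ : Ξ) :
    Integrable (fun q : Ξ × Ξ => KK B ξ q.1 q.2 * f q.1 * g q.2) := by
  have hbnd : Integrable (fun q : Ξ × Ξ => ‖f q.1‖ * ‖g q.2‖) := by
    rw [Measure.volume_eq_prod]
    exact f.integrable.norm.mul_prod g.integrable.norm
  refine hbnd.mono' ?_ (ae_of_all _ fun q => ?_)
  · have hK : Continuous fun q : Ξ × Ξ => KK B ξ q.1 q.2 := by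
      simpa only [Function.comp_def, id_eq] using
        (KK_cont B hBc).comp ((continuous_const (y := ξ)).prodMk continuous_id)
    exact ((hK.mul (f.continuous.comp continuous_fst)).mul
      (g.continuous.comp continuous_snd)).aestronglyMeasurable
  · rw [norm_mul, norm_mul, norm_KK, one_mul]

lemma hInt3 (hBc : ∀ j k : Fin N, Continuous fun z => B z j k)
    (f g h : SchwartzMap ((Fin N → ℝ) × (Fin N → ℝ)) ℂ) :
    Integrable (fun p : Ξ × Ξ × Ξ =>
      KK B p.1 p.2.1 p.2.2 * f p.2.1 * g p.2.2 * h p.1) := by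
  have hbnd : Integrable (fun p : Ξ × Ξ × Ξ => ‖h p.1‖ * (‖f p.2.1‖ * ‖g p.2.2‖)) := by
    rw [Measure.volume_eq_prod]
    exact h.integrable.norm.mul_prod (f.integrable.norm.mul_prod g.integrable.norm)
  refine hbnd.mono' ?_ (ae_of_all _ fun p => ?_)
  · exact ((((KK_cont B hBc).mul
      (f.continuous.comp (continuous_fst.comp continuous_snd))).mul
      (g.continuous.comp (continuous_snd.comp continuous_snd))).mul
      (h.continuous.comp continuous_fst)).aestronglyMeasurable
  · rw [norm_mul, norm_mul, norm_mul, norm_KK, one_mul]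
    exact le_of_eq (by ring)

lemma moyal_pair (hBc : ∀ j k : Fin N, Continuous fun z => B z j k)
    (f g h : SchwartzMap ((Fin N → ℝ) × (Fin N → ℝ)) ℂ) :
    (∫ ξ : Ξ, moyal B (⇑f) (⇑g) ξ * h ξ)
      = (((π ^ (2 * N))⁻¹ : ℝ) : ℂ) *
        ∫ p : Ξ × Ξ × Ξ, KK B p.1 p.2.1 p.2.2 * f p.2.1 * g p.2.2 * h p.1 := by
  have step1 : ∀ ξ : Ξ, moyal B (⇑f) (⇑g) ξ * h ξ
      = (((π ^ (2 * N))⁻¹ : ℝ) : ℂ) *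
          ∫ q : Ξ × Ξ, KK B ξ q.1 q.2 * f q.1 * g q.2 * h ξ := by
    intro ξ
    rw [moyal_KK, mul_assoc]
    congr 1
    rw [integral_mul_const]
    congr 1
    exact integral_integral (hsec B hBc f g ξ)
  calc (∫ ξ : Ξ, moyal B (⇑f) (⇑g) ξ * h ξ)
      = ∫ ξ : Ξ, (((π ^ (2 * N))⁻¹ : ℝ) : ℂ) *
          ∫ q : Ξ × Ξ, KK B ξ q.1 q.2 * f q.1 * g q.2 * h ξ :=
        integral_congr_ae (ae_of_all _ step1)
    _ = (((π ^ (2 * N))⁻¹ : ℝ) : ℂ) *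
          ∫ ξ : Ξ, ∫ q : Ξ × Ξ, KK B ξ q.1 q.2 * f q.1 * g q.2 * h ξ := by
        rw [integral_const_mul]
    _ = (((π ^ (2 * N))⁻¹ : ℝ) : ℂ) *
          ∫ p : Ξ × Ξ × Ξ, KK B p.1 p.2.1 p.2.2 * f p.2.1 * g p.2.2 * h p.1 := by
        congr 1
        exact integral_integral (hInt3 B hBc f g h)

lemma rot_mp {α : Type*} [MeasureSpace α] [SFinite (volume : Measure α)] :
    MeasurePreserving
      (fun p : α × α × α => ((p.2.1, (p.2.2, p.1)) : α × α × α)) volume volume := by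
  have h1 : MeasurePreserving (Prod.swap : α × α × α → (α × α) × α)
      (volume : Measure (α × α × α)) ((volume : Measure (α × α)).prod volume) :=
    Measure.measurePreserving_swap
  have h2 : MeasurePreserving (MeasurableEquiv.prodAssoc : (α × α) × α ≃ᵐ α × α × α)
      ((volume : Measure (α × α)).prod volume) (volume : Measure (α × α × α)) :=
    measurePreserving_prodAssoc volume volume volume
  exact h2.comp h1

lemma key (hanti : ∀ (z : Fin N → ℝ) (j k : Fin N), B z j k = - B z k j)
    (hBc : ∀ j k : Fin N, Continuous fun z => B z j k)
    (f g h : SchwartzMap ((Fin N → ℝ) × (Fin N → ℝ)) ℂ) :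
    (∫ ξ : Ξ, moyal B (⇑f) (⇑g) ξ * h ξ) = ∫ ξ : Ξ, f ξ * moyal B (⇑g) (⇑h) ξ := by
  have hcomm : (∫ ξ : Ξ, f ξ * moyal B (⇑g) (⇑h) ξ)
      = ∫ ξ : Ξ, moyal B (⇑g) (⇑h) ξ * f ξ :=
    integral_congr_ae (ae_of_all _ fun ξ => mul_comm _ _)
  rw [hcomm, moyal_pair B hBc f g h, moyal_pair B hBc g h f]
  congr 1
  have hmp : MeasurePreserving
      (fun p : Ξ × Ξ × Ξ => ((p.2.1, (p.2.2, p.1)) : Ξ × Ξ × Ξ)) volume volume := rot_mp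
  have hmp2 : MeasurePreserving
      (fun p : Ξ × Ξ × Ξ => ((p.2.2, (p.1, p.2.1)) : Ξ × Ξ × Ξ)) volume volume := hmp.comp hmp
  have hemb : MeasurableEmbedding
      (fun p : Ξ × Ξ × Ξ => ((p.2.2, (p.1, p.2.1)) : Ξ × Ξ × Ξ)) := by
    rw [show (fun p : Ξ × Ξ × Ξ => ((p.2.2, (p.1, p.2.1)) : Ξ × Ξ × Ξ))
        = ⇑(((MeasurableEquiv.prodComm (α := Ξ) (β := Ξ × Ξ)).trans
            (MeasurableEquiv.prodAssoc)).trans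
          ((MeasurableEquiv.prodComm (α := Ξ) (β := Ξ × Ξ)).trans
            (MeasurableEquiv.prodAssoc))) from rfl]
    exact MeasurableEquiv.measurableEmbedding _
  calc (∫ p : Ξ × Ξ × Ξ, KK B p.1 p.2.1 p.2.2 * f p.2.1 * g p.2.2 * h p.1)
      = ∫ p : Ξ × Ξ × Ξ, KK B p.2.2 p.1 p.2.1 * f p.1 * g p.2.1 * h p.2.2 :=
        (hmp2.integral_comp hemb
          (fun p : Ξ × Ξ × Ξ => KK B p.1 p.2.1 p.2.2 * f p.2.1 * g p.2.2 * h p.1)).symm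
    _ = ∫ p : Ξ × Ξ × Ξ, KK B p.1 p.2.1 p.2.2 * g p.2.1 * h p.2.2 * f p.1 :=
        integral_congr_ae (ae_of_all _ fun p => by
          simp only []
          rw [KK_cyc B hanti hBc p.2.2 p.1 p.2.1]; ring)
end main

end Aux17

/-- cyclic duality of the magnetic Moyal product with respect to the
bilinear pairing `(u,v) = ∫ u·v`: `(f∘^B g, h) = (f, g∘^B h) = (g, h∘^B f)`. -/
theorem stmt17 {N : ℕ} (hN : 1 ≤ N) (B : (Fin N → ℝ) → Fin N → Fin N → ℝ)
    (hanti : ∀ (z : Fin N → ℝ) (j k : Fin N), B z j k = - B z k j)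
    (hB : ∀ j k : Fin N, IsCPol fun z => B z j k) :
    ∀ f g h : SchwartzMap ((Fin N → ℝ) × (Fin N → ℝ)) ℂ,
      (∫ ξ : (Fin N → ℝ) × (Fin N → ℝ), moyal B (⇑f) (⇑g) ξ * h ξ) =
        (∫ ξ : (Fin N → ℝ) × (Fin N → ℝ), f ξ * moyal B (⇑g) (⇑h) ξ) ∧
      (∫ ξ : (Fin N → ℝ) × (Fin N → ℝ), moyal B (⇑f) (⇑g) ξ * h ξ) =
        ∫ ξ : (Fin N → ℝ) × (Fin N → ℝ), g ξ * moyal B (⇑h) (⇑f) ξ := by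
  have hBc : ∀ j k : Fin N, Continuous fun z => B z j k := fun j k => (hB j k).1.continuous
  intro f g h
  refine ⟨key B hanti hBc f g h, ?_⟩
  calc (∫ ξ : (Fin N → ℝ) × (Fin N → ℝ), moyal B (⇑f) (⇑g) ξ * h ξ)
      = ∫ ξ : (Fin N → ℝ) × (Fin N → ℝ), f ξ * moyal B (⇑g) (⇑h) ξ :=
        key B hanti hBc f g h
    _ = ∫ ξ : (Fin N → ℝ) × (Fin N → ℝ), moyal B (⇑g) (⇑h) ξ * f ξ :=
        integral_congr_ae (Filter.Eventually.of_forall fun ξ => mul_comm _ _)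
    _ = ∫ ξ : (Fin N → ℝ) × (Fin N → ℝ), g ξ * moyal B (⇑h) (⇑f) ξ :=
        key B hanti hBc g h f
end
end
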